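/- arXiv:1910.02466 — 9 statements merged into one kernel-verified Lean document; each statement's English description precedes it below -/
import Mathlib

section
/- If the initial value is h₀ = 0, then the forward ODE system has a unique solution (h, f, g) defined on all of [0, ∞) (i.e., τ(0) = ∞), and this solution satisfies h(t) = 0 for all t ≥ 0; moreover f is given explicitly by f(t) = (1 + (C₀ − 1)e^{−C₀ t})/C₀ if C₀ ≠ 0 and f(t) = 1 + t if C₀ = 0. -/
/-!
With `h₀ = 0` the `h`-equation is linear and homogeneous in `h`, so Grönwall forces `h ≡ 0`.
The `f`-equation then reads `f' = 1 - C₀ f`, whose solution is the explicit formula, and `g`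
solves the Riccati equation `g' = aσ_D² f - (2/α) g² - C₀ g`. Uniqueness of every component is
Grönwall applied to the difference of two solutions. For existence, `aσ_D² f > 0` makes the field
of the Riccati equation positive at `0` and negative at any large `B`, so `[0, B]` is forward
invariant; Picard–Lindelöf then gives a solution on every `[0, n]` that never blows up, and these
are glued by uniqueness.
-/

open Set

/-- The forward ODE system of Proposition A.1: on a set `s ⊆ ℝ`,
`h' = (2g/α)·h` with `h 0 = h₀`, `f' = 1 + f·((a²σ_D²/(2I))·h − C₀)` with `f 0 = 1`,
and `g' = aσ_D²·f − (2/α)·g² + g·((a²σ_D²/(2I))·h − C₀)` with `g 0 = 0`. -/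
def FwdSol (I : ℕ) (C₀ a σD α h₀ : ℝ) (h f g : ℝ → ℝ) (s : Set ℝ) : Prop :=
  h 0 = h₀ ∧ f 0 = 1 ∧ g 0 = 0 ∧
    ∀ t ∈ s,
      HasDerivWithinAt h (2 * g t / α * h t) s t ∧
      HasDerivWithinAt f (1 + f t * (a ^ 2 * σD ^ 2 / (2 * (I : ℝ)) * h t - C₀)) s t ∧
      HasDerivWithinAt g
        (a * σD ^ 2 * f t - 2 / α * g t ^ 2 +
          g t * (a ^ 2 * σD ^ 2 / (2 * (I : ℝ)) * h t - C₀)) s t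

open Real NNReal

section

variable {E : Type*} [NormedAddCommGroup E] [NormedSpace ℝ E]

theorem HasDerivWithinAt.Ici_of_Icc {u : ℝ → E} {u' : E} {a b t : ℝ}
    (hu : HasDerivWithinAt u u' (Icc a b) t) (ht : t ∈ Ico a b) :
    HasDerivWithinAt u u' (Ici t) t :=
  hu.mono_of_mem_nhdsWithin (Icc_mem_nhdsGE_of_mem ht)

theorem eqOn_Icc_of_deriv_sub_eq_smul {u w u' w' : ℝ → E} {k : ℝ → ℝ} {a b : ℝ}
    (hu : ∀ t ∈ Icc a b, HasDerivWithinAt u (u' t) (Icc a b) t)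
    (hw : ∀ t ∈ Icc a b, HasDerivWithinAt w (w' t) (Icc a b) t)
    (hk : ContinuousOn k (Icc a b))
    (hderiv : ∀ t ∈ Icc a b, u' t - w' t = k t • (u t - w t)) (ha : u a = w a) :
    EqOn u w (Icc a b) := by
  obtain ⟨K, hK⟩ := isCompact_Icc.exists_bound_of_continuousOn hk
  have hsub : ∀ t ∈ Icc a b, HasDerivWithinAt (u - w) (u' t - w' t) (Icc a b) t :=
    fun t ht => (hu t ht).sub (hw t ht)
  have hbound : ∀ t ∈ Ico a b, ‖u' t - w' t‖ ≤ K * ‖(u - w) t‖ := fun t ht => by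
    rw [hderiv t (Ico_subset_Icc_self ht), norm_smul]
    exact mul_le_mul_of_nonneg_right (hK t (Ico_subset_Icc_self ht)) (norm_nonneg _)
  exact fun t ht => sub_eq_zero.mp <| eq_zero_of_abs_deriv_le_mul_abs_self_of_eq_zero_right
    (fun t ht => (hsub t ht).continuousWithinAt)
    (fun t ht => (hsub t (Ico_subset_Icc_self ht)).Ici_of_Icc ht) (sub_eq_zero.mpr ha)
    hbound t ht

theorem eqOn_Ici_of_deriv_sub_eq_smul {u w u' w' : ℝ → E} {k : ℝ → ℝ} {t₀ : ℝ}
    (hu : ∀ t ∈ Ici t₀, HasDerivWithinAt u (u' t) (Ici t₀) t)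
    (hw : ∀ t ∈ Ici t₀, HasDerivWithinAt w (w' t) (Ici t₀) t)
    (hk : ContinuousOn k (Ici t₀))
    (hderiv : ∀ t ∈ Ici t₀, u' t - w' t = k t • (u t - w t)) (h₀ : u t₀ = w t₀) :
    EqOn u w (Ici t₀) := fun _ ht =>
  eqOn_Icc_of_deriv_sub_eq_smul (fun s hs => (hu s hs.1).mono Icc_subset_Ici_self)
    (fun s hs => (hw s hs.1).mono Icc_subset_Ici_self) (hk.mono Icc_subset_Ici_self)
    (fun s hs => hderiv s hs.1) h₀ ⟨ht, le_rfl⟩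

theorem exists_hasDerivWithinAt_Ici_of_Icc {v : ℝ → E → E} {t₀ : ℝ} (u : ℕ → ℝ → E)
    (hu : ∀ n : ℕ, ∀ t ∈ Icc t₀ (t₀ + n),
      HasDerivWithinAt (u n) (v t (u n t)) (Icc t₀ (t₀ + n)) t)
    (hagree : ∀ m n : ℕ, m ≤ n → EqOn (u m) (u n) (Icc t₀ (t₀ + m))) :
    ∃ U : ℝ → E, U t₀ = u 0 t₀ ∧ ∀ t ∈ Ici t₀, HasDerivWithinAt U (v t (U t)) (Ici t₀) t := by
  set idx : ℝ → ℕ := fun t => ⌈t - t₀⌉₊ + 1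
  have hidx : ∀ t, t < t₀ + idx t := fun t => by
    have := Nat.le_ceil (t - t₀); push_cast [idx]; linarith
  have heq : ∀ n : ℕ, ∀ t ∈ Icc t₀ (t₀ + n), u (idx t) t = u n t := by
    intro n t ht
    rcases le_total (idx t) n with h | h
    · exact hagree _ _ h ⟨ht.1, (hidx t).le⟩
    · exact (hagree _ _ h ht).symm
  refine ⟨fun t => u (idx t) t, (heq 0 t₀ (by simp)).trans rfl, fun t ht => ?_⟩
  have hmem : Icc t₀ (t₀ + idx t) ∈ nhdsWithin t (Ici t₀) :=
    Filter.mem_of_superset (inter_mem_nhdsWithin _ (Iio_mem_nhds (hidx t)))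
      fun s hs => ⟨hs.1, hs.2.le⟩
  have hn := (hu (idx t) t ⟨ht, (hidx t).le⟩).mono_of_mem_nhdsWithin hmem
  exact hn.congr_of_eventuallyEq (Filter.mem_of_superset hmem fun s hs => heq _ s hs) rfl

end

theorem exists_forall_mem_Icc_hasDerivWithinAt_of_inward {v : ℝ → ℝ → ℝ}
    {t₀ T lo hi x₀ : ℝ} {K : ℝ≥0} (hT : t₀ ≤ T) (hx₀ : x₀ ∈ Icc lo hi)
    (hcont : ContinuousOn (Function.uncurry v) (Icc t₀ T ×ˢ Icc lo hi))
    (hlip : ∀ t ∈ Icc t₀ T, LipschitzOnWith K (v t) (Icc lo hi))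
    (hlo : ∀ t ∈ Ico t₀ T, 0 < v t lo) (hhi : ∀ t ∈ Ico t₀ T, v t hi < 0) :
    ∃ u : ℝ → ℝ, u t₀ = x₀ ∧ ∀ t ∈ Icc t₀ T,
      u t ∈ Icc lo hi ∧ HasDerivWithinAt u (v t (u t)) (Icc t₀ T) t := by
  -- Solve for the field clamped to `[lo, hi]`, which is globally Lipschitz and bounded; the
  -- solution never leaves `[lo, hi]`, where the clamp does nothing.
  have hle : lo ≤ hi := hx₀.1.trans hx₀.2
  set p : ℝ → ℝ := fun x => projIcc lo hi hle x
  have hp : ∀ x, p x ∈ Icc lo hi := fun x => (projIcc lo hi hle x).2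
  have hp_id : ∀ x ∈ Icc lo hi, p x = x := fun x hx => by simp [p, projIcc_of_mem hle hx]
  obtain ⟨L, hL⟩ := (isCompact_Icc.prod isCompact_Icc).exists_bound_of_continuousOn hcont
  have hL₀ : 0 ≤ L := (norm_nonneg _).trans (hL (t₀, x₀) ⟨left_mem_Icc.2 hT, hx₀⟩)
  have hpl : IsPicardLindelof (fun t x => v t (p x)) (⟨t₀, left_mem_Icc.2 hT⟩ : Icc t₀ T) x₀
      ⟨L * (T - t₀), mul_nonneg hL₀ (sub_nonneg.2 hT)⟩ 0 ⟨L, hL₀⟩ K := by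
    refine ⟨fun t ht => ?_, fun x _ => ?_, fun t ht x _ => hL (t, p x) ⟨ht, hp x⟩, ?_⟩
    · have hpLip : LipschitzWith 1 p := by
        have := (LipschitzWith.subtype_val _).comp (LipschitzWith.projIcc hle)
        rwa [mul_one] at this
      have := (hlip t ht).comp (hpLip.lipschitzOnWith (s := univ)) fun x _ => hp x
      rw [mul_one] at this
      exact this.mono (subset_univ _)
    · exact hcont.comp (continuousOn_id.prodMk continuousOn_const) fun t ht => ⟨ht, hp x⟩
    · show L * max (T - t₀) (t₀ - t₀) ≤ L * (T - t₀) - 0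
      simp [max_eq_left (sub_nonneg.2 hT)]
  obtain ⟨u, hu₀, hu⟩ := hpl.exists_eq_forall_mem_Icc_hasDerivWithinAt₀
  have hcont_u : ContinuousOn u (Icc t₀ T) := fun t ht => (hu t ht).continuousWithinAt
  have hu_Ici : ∀ t ∈ Ico t₀ T, HasDerivWithinAt u (v t (p (u t))) (Ici t) t :=
    fun t ht => (hu t (Ico_subset_Icc_self ht)).Ici_of_Icc ht
  have hu_le : ∀ t ∈ Icc t₀ T, u t ≤ hi :=
    image_le_of_deriv_right_lt_deriv_boundary hcont_u hu_Ici (hu₀ ▸ hx₀.2)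
      (fun _ => hasDerivAt_const _ hi) fun t ht hut => by
        simpa [hut, hp_id hi (right_mem_Icc.2 hle)] using hhi t ht
  have hu_ge : ∀ t ∈ Icc t₀ T, -u t ≤ -lo :=
    image_le_of_deriv_right_lt_deriv_boundary hcont_u.neg (fun t ht => (hu_Ici t ht).neg)
      (by simpa [hu₀] using hx₀.1) (fun _ => hasDerivAt_const _ (-lo)) fun t ht hut => by
        simpa [neg_inj.1 hut, hp_id lo (left_mem_Icc.2 hle)] using hlo t ht
  refine ⟨u, hu₀, fun t ht => ?_⟩
  have hmem : u t ∈ Icc lo hi := ⟨neg_le_neg_iff.1 (hu_ge t ht), hu_le t ht⟩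
  exact ⟨hmem, hp_id _ hmem ▸ hu t ht⟩

def riccatiField (φ : ℝ → ℝ) (β C₀ t x : ℝ) : ℝ :=
  φ t - β * x ^ 2 - C₀ * x

theorem riccatiField_sub (φ : ℝ → ℝ) (β C₀ t x y : ℝ) :
    riccatiField φ β C₀ t x - riccatiField φ β C₀ t y = -(β * (x + y) + C₀) * (x - y) := by
  unfold riccatiField
  ring

theorem eqOn_Icc_of_riccati {φ : ℝ → ℝ} {β C₀ a b : ℝ} {u w : ℝ → ℝ}
    (hu : ∀ t ∈ Icc a b, HasDerivWithinAt u (riccatiField φ β C₀ t (u t)) (Icc a b) t)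
    (hw : ∀ t ∈ Icc a b, HasDerivWithinAt w (riccatiField φ β C₀ t (w t)) (Icc a b) t)
    (ha : u a = w a) : EqOn u w (Icc a b) := by
  have hu_cont : ContinuousOn u (Icc a b) := fun t ht => (hu t ht).continuousWithinAt
  have hw_cont : ContinuousOn w (Icc a b) := fun t ht => (hw t ht).continuousWithinAt
  have hcont : ContinuousOn (fun t => -(β * (u t + w t) + C₀)) (Icc a b) :=
    ((continuousOn_const.mul (hu_cont.add hw_cont)).add continuousOn_const).neg
  exact eqOn_Icc_of_deriv_sub_eq_smul hu hw hcont
    (fun t _ => riccatiField_sub φ β C₀ t (u t) (w t)) ha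

theorem exists_riccati_Icc {φ : ℝ → ℝ} {β C₀ t₀ T x₀ : ℝ} (hβ : 0 < β) (hT : t₀ ≤ T)
    (hφ : ContinuousOn φ (Icc t₀ T)) (hφ_pos : ∀ t ∈ Icc t₀ T, 0 < φ t) (hx₀ : 0 ≤ x₀) :
    ∃ u : ℝ → ℝ, u t₀ = x₀ ∧
      ∀ t ∈ Icc t₀ T, HasDerivWithinAt u (riccatiField φ β C₀ t (u t)) (Icc t₀ T) t := by
  obtain ⟨M, hM⟩ := isCompact_Icc.exists_bound_of_continuousOn hφ
  obtain ⟨B, hx₀B, hB⟩ : ∃ B, x₀ ≤ B ∧ M < β * B ^ 2 + C₀ * B := by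
    set D := (|C₀| + |M| + 1) / β
    have hD₀ : 0 ≤ D := by positivity
    have hβD : β * D = |C₀| + |M| + 1 := mul_div_cancel₀ _ hβ.ne'
    refine ⟨D + 1 + x₀, by linarith, ?_⟩
    have hslope : |M| + 1 ≤ β * (D + 1 + x₀) + C₀ := by
      nlinarith [neg_abs_le C₀, mul_nonneg hβ.le hx₀]
    calc M < |M| + 1 := by linarith [le_abs_self M]
      _ ≤ (D + 1 + x₀) * (β * (D + 1 + x₀) + C₀) := by nlinarith [abs_nonneg M]
      _ = β * (D + 1 + x₀) ^ 2 + C₀ * (D + 1 + x₀) := by ring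
  have hB₀ : 0 ≤ B := hx₀.trans hx₀B
  obtain ⟨u, hu₀, hu⟩ := exists_forall_mem_Icc_hasDerivWithinAt_of_inward
    (K := ⟨2 * β * B + |C₀|, by positivity⟩) (v := riccatiField φ β C₀) hT ⟨hx₀, hx₀B⟩
    (show ContinuousOn (fun p : ℝ × ℝ => φ p.1 - β * p.2 ^ 2 - C₀ * p.2) _ from
      ((hφ.comp continuousOn_fst fun _ hp => hp.1).sub (by fun_prop)).sub (by fun_prop))
    (fun t _ => LipschitzOnWith.of_dist_le_mul fun x hx y hy => by
      rw [Real.dist_eq, Real.dist_eq, riccatiField_sub, abs_mul, abs_neg]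
      refine mul_le_mul_of_nonneg_right ?_ (abs_nonneg _)
      show |β * (x + y) + C₀| ≤ 2 * β * B + |C₀|
      calc |β * (x + y) + C₀| ≤ |β * (x + y)| + |C₀| := abs_add_le _ _
        _ = β * (x + y) + |C₀| := by rw [abs_of_nonneg (by nlinarith [hx.1, hy.1])]
        _ ≤ 2 * β * B + |C₀| := by nlinarith [hx.2, hy.2])
    (fun t ht => by simpa [riccatiField] using hφ_pos t (Ico_subset_Icc_self ht))
    (fun t ht => by
      have := (le_abs_self _).trans (hM t (Ico_subset_Icc_self ht))
      unfold riccatiField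
      linarith)
  exact ⟨u, hu₀, fun t ht => (hu t ht).2⟩

theorem exists_riccati_Ici {φ : ℝ → ℝ} {β C₀ t₀ x₀ : ℝ} (hβ : 0 < β)
    (hφ : ContinuousOn φ (Ici t₀)) (hφ_pos : ∀ t ∈ Ici t₀, 0 < φ t) (hx₀ : 0 ≤ x₀) :
    ∃ u : ℝ → ℝ, u t₀ = x₀ ∧
      ∀ t ∈ Ici t₀, HasDerivWithinAt u (riccatiField φ β C₀ t (u t)) (Ici t₀) t := by
  have hsub : ∀ n : ℕ, Icc t₀ (t₀ + n) ⊆ Ici t₀ := fun _ => Icc_subset_Ici_self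
  choose u hu₀ hu using fun n : ℕ => exists_riccati_Icc (C₀ := C₀) hβ
    (le_add_of_nonneg_right n.cast_nonneg) (hφ.mono (hsub n)) (fun t ht => hφ_pos t (hsub n ht))
    hx₀
  have hagree : ∀ m n : ℕ, m ≤ n → EqOn (u m) (u n) (Icc t₀ (t₀ + m)) := fun m n hmn => by
    have hmn' : Icc t₀ (t₀ + m) ⊆ Icc t₀ (t₀ + n) :=
      Icc_subset_Icc_right (by simpa using hmn)
    exact eqOn_Icc_of_riccati (hu m) (fun t ht => (hu n t (hmn' ht)).mono hmn')
      ((hu₀ m).trans (hu₀ n).symm)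
  obtain ⟨U, hU₀, hU⟩ := exists_hasDerivWithinAt_Ici_of_Icc u hu hagree
  exact ⟨U, hU₀.trans (hu₀ 0), hU⟩

noncomputable def fwdF (C₀ t : ℝ) : ℝ :=
  if C₀ = 0 then 1 + t else (1 + (C₀ - 1) * exp (-C₀ * t)) / C₀

theorem fwdF_zero (C₀ : ℝ) : fwdF C₀ 0 = 1 := by
  by_cases hC : C₀ = 0 <;> simp [fwdF, hC]

theorem hasDerivAt_fwdF (C₀ t : ℝ) : HasDerivAt (fwdF C₀) (1 - C₀ * fwdF C₀ t) t := by
  unfold fwdF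
  split_ifs with hC
  · simpa [hC] using (hasDerivAt_id t).const_add 1
  · have hexp : HasDerivAt (fun t => exp (-C₀ * t)) (exp (-C₀ * t) * -C₀) t := by
      simpa using ((hasDerivAt_id t).const_mul (-C₀)).exp
    refine (((hexp.const_mul (C₀ - 1)).const_add 1).div_const C₀).congr_deriv ?_
    field_simp
    ring

theorem continuous_fwdF (C₀ : ℝ) : Continuous (fwdF C₀) :=
  continuous_iff_continuousAt.2 fun t => (hasDerivAt_fwdF C₀ t).continuousAt

theorem fwdF_pos (C₀ : ℝ) {t : ℝ} (ht : 0 ≤ t) : 0 < fwdF C₀ t := by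
  unfold fwdF
  split_ifs with hC
  · linarith
  · have hsplit : (1 + (C₀ - 1) * exp (-C₀ * t)) / C₀ =
        exp (-C₀ * t) + (1 - exp (-C₀ * t)) / C₀ := by
      field_simp
      ring
    rw [hsplit]
    refine add_pos_of_pos_of_nonneg (exp_pos _) ?_
    rcases lt_or_gt_of_ne hC with hneg | hpos
    · exact div_nonneg_of_nonpos (sub_nonpos.2 (one_le_exp (by nlinarith))) hneg.le
    · exact div_nonneg (sub_nonneg.2 (exp_le_one_iff.2 (by nlinarith))) hpos.le

section FwdSol

variable {I : ℕ} {C₀ a σD α : ℝ} {h f g : ℝ → ℝ}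

theorem FwdSol.h_eqOn_zero (hs : FwdSol I C₀ a σD α 0 h f g (Ici 0)) : EqOn h 0 (Ici 0) := by
  obtain ⟨hh₀, -, -, hderiv⟩ := hs
  have hg : ContinuousOn g (Ici 0) := fun t ht => (hderiv t ht).2.2.continuousWithinAt
  exact eqOn_Ici_of_deriv_sub_eq_smul (k := fun t => 2 * g t / α) (fun t ht => (hderiv t ht).1)
    (fun t _ => hasDerivWithinAt_const t _ 0) ((continuousOn_const.mul hg).div_const α)
    (fun t _ => by simp) hh₀

theorem FwdSol.f_eqOn_fwdF (hs : FwdSol I C₀ a σD α 0 h f g (Ici 0)) :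
    EqOn f (fwdF C₀) (Ici 0) := by
  have hh := hs.h_eqOn_zero
  obtain ⟨-, hf₀, -, hderiv⟩ := hs
  refine eqOn_Ici_of_deriv_sub_eq_smul (fun t ht => (hderiv t ht).2.1)
    (fun t _ => (hasDerivAt_fwdF C₀ t).hasDerivWithinAt) (continuousOn_const (c := -C₀))
    (fun t ht => ?_) (hf₀.trans (fwdF_zero C₀).symm)
  rw [hh ht, Pi.zero_apply, smul_eq_mul]
  ring

theorem FwdSol.hasDerivWithinAt_riccati (hs : FwdSol I C₀ a σD α 0 h f g (Ici 0)) :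
    ∀ t ∈ Ici 0, HasDerivWithinAt g
      (riccatiField (fun t => a * σD ^ 2 * fwdF C₀ t) (2 / α) C₀ t (g t)) (Ici 0) t := by
  intro t ht
  have hht := hs.h_eqOn_zero ht
  have hft := hs.f_eqOn_fwdF ht
  convert (hs.2.2.2 t ht).2.2 using 1
  rw [hht, hft, Pi.zero_apply, riccatiField]
  ring

theorem FwdSol.g_eqOn {h' f' g' : ℝ → ℝ} (hs : FwdSol I C₀ a σD α 0 h f g (Ici 0))
    (hs' : FwdSol I C₀ a σD α 0 h' f' g' (Ici 0)) : EqOn g g' (Ici 0) := fun _ ht =>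
  eqOn_Icc_of_riccati (fun s hst => (hs.hasDerivWithinAt_riccati s hst.1).mono Icc_subset_Ici_self)
    (fun s hst => (hs'.hasDerivWithinAt_riccati s hst.1).mono Icc_subset_Ici_self)
    (hs.2.2.1.trans hs'.2.2.1.symm) ⟨ht, le_rfl⟩

end FwdSol

theorem exists_fwdSol_zero_fwdF (I : ℕ) (C₀ : ℝ) {a σD α : ℝ} (ha : 0 < a) (hσD : 0 < σD)
    (hα : 0 < α) : ∃ g : ℝ → ℝ, FwdSol I C₀ a σD α 0 0 (fwdF C₀) g (Ici 0) := by
  obtain ⟨g, hg₀, hg⟩ := exists_riccati_Ici (φ := fun t => a * σD ^ 2 * fwdF C₀ t) (C₀ := C₀)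
    (div_pos two_pos hα) (continuous_const.mul (continuous_fwdF C₀)).continuousOn
    (fun t ht => mul_pos (by positivity) (fwdF_pos C₀ ht)) le_rfl
  refine ⟨g, rfl, fwdF_zero C₀, hg₀, fun t ht => ⟨?_, ?_, ?_⟩⟩
  · exact (hasDerivWithinAt_const t _ 0).congr_deriv (by simp)
  · refine (hasDerivAt_fwdF C₀ t).hasDerivWithinAt.congr_deriv ?_
    simp only [Pi.zero_apply]
    ring
  · convert hg t ht using 1
    simp only [Pi.zero_apply, riccatiField]
    ring

theorem stmt1_general (I : ℕ) (C₀ a σD α : ℝ)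
    (ha : 0 < a) (hσD : 0 < σD) (hα : 0 < α) :
    (∃ h f g : ℝ → ℝ,
      FwdSol I C₀ a σD α 0 h f g (Ici 0) ∧
      ∀ t ∈ Ici (0 : ℝ), h t = 0 ∧
        f t = if C₀ = 0 then 1 + t else (1 + (C₀ - 1) * Real.exp (-C₀ * t)) / C₀) ∧
    (∀ h f g h' f' g' : ℝ → ℝ,
      FwdSol I C₀ a σD α 0 h f g (Ici 0) → FwdSol I C₀ a σD α 0 h' f' g' (Ici 0) →
      ∀ t ∈ Ici (0 : ℝ), h t = h' t ∧ f t = f' t ∧ g t = g' t) := by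
  obtain ⟨g, hg⟩ := exists_fwdSol_zero_fwdF I C₀ ha hσD hα
  refine ⟨⟨0, fwdF C₀, g, hg, fun t _ => ⟨rfl, rfl⟩⟩, fun h f g h' f' g' hs hs' t ht => ?_⟩
  exact ⟨(hs.h_eqOn_zero ht).trans (hs'.h_eqOn_zero ht).symm,
    (hs.f_eqOn_fwdF ht).trans (hs'.f_eqOn_fwdF ht).symm, hs.g_eqOn hs' ht⟩

/-- with initial value `h₀ = 0`, the forward ODE system has a unique solution on
all of `[0,∞)` (so `τ(0) = ∞`); it satisfies `h ≡ 0` and `f` is given explicitly. -/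
theorem stmt1 (I : ℕ) (hI : 1 ≤ I) (C₀ T a σD α k : ℝ)
    (hT : 0 < T) (ha : 0 < a) (hσD : 0 < σD) (hα : 0 < α) (hk : 0 < k) :
    (∃ h f g : ℝ → ℝ,
      FwdSol I C₀ a σD α 0 h f g (Ici 0) ∧
      ∀ t ∈ Ici (0 : ℝ), h t = 0 ∧
        f t = if C₀ = 0 then 1 + t else (1 + (C₀ - 1) * Real.exp (-C₀ * t)) / C₀) ∧
    (∀ h f g h' f' g' : ℝ → ℝ,
      FwdSol I C₀ a σD α 0 h f g (Ici 0) → FwdSol I C₀ a σD α 0 h' f' g' (Ici 0) →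
      ∀ t ∈ Ici (0 : ℝ), h t = h' t ∧ f t = f' t ∧ g t = g' t) :=
  stmt1_general I C₀ a σD α ha hσD hα
end

section
/- For any initial value h₀ ∈ ℝ, the component f of the maximal solution (h, f, g) of the forward ODE system satisfies f(t) > 0 for all t in the maximal interval of existence [0, τ(h₀)). -/
/-!
Whatever `h` does, the `f`-equation reads `f' = 1 + f·φ`, so `f' = 1 > 0` at every zero of `f`.
Starting from `f 0 = 1`, the function therefore can never cross zero (fencing comparison with
the constant `0`), and it cannot touch zero at an interior time either, since such a time would
be a minimum of `f` on `[0, τ)` at which the derivative is positive.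
-/

open Set

theorem nonneg_of_hasDerivWithinAt_pos_of_eq_zero {f f' : ℝ → ℝ} {a b : ℝ} (ha : 0 ≤ f a)
    (hf : ∀ t ∈ Ico a b, HasDerivWithinAt f (f' t) (Ico a b) t)
    (hzero : ∀ t ∈ Ico a b, f t = 0 → 0 < f' t) : ∀ t ∈ Ico a b, 0 ≤ f t := by
  intro t ht
  have hsub : Icc a t ⊆ Ico a b := Icc_subset_Ico_right ht.2
  have hright : ∀ x ∈ Ico a t, HasDerivWithinAt (-f) (-f' x) (Ici x) x := fun x hx =>
    ((hf x (hsub (Ico_subset_Icc_self hx))).mono_of_mem_nhdsWithin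
      (Filter.mem_of_superset (Ico_mem_nhdsGE (hx.2.trans_le ht.2.le))
        (Ico_subset_Ico_left hx.1))).neg
  have hle := image_le_of_deriv_right_lt_deriv_boundary' (B := 0) (B' := 0)
    (fun x hx => ((hf x (hsub hx)).continuousWithinAt.mono hsub).neg) hright
    (by simpa using ha) continuousOn_const (fun _ _ => hasDerivWithinAt_const _ _ _)
    (fun x hx hfx => by simpa using hzero x (hsub (Ico_subset_Icc_self hx)) (by simpa using hfx))
    (right_mem_Icc.2 ht.1)
  simpa using hle

theorem pos_of_hasDerivWithinAt_pos_of_eq_zero {f f' : ℝ → ℝ} {a b : ℝ} (ha : 0 < f a)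
    (hf : ∀ t ∈ Ico a b, HasDerivWithinAt f (f' t) (Ico a b) t)
    (hzero : ∀ t ∈ Ico a b, f t = 0 → 0 < f' t) : ∀ t ∈ Ico a b, 0 < f t := by
  intro t ht
  have hnonneg := nonneg_of_hasDerivWithinAt_pos_of_eq_zero ha.le hf hzero
  refine (hnonneg t ht).lt_of_ne fun hft => ?_
  have hat : a < t := ht.1.lt_of_ne (by rintro rfl; exact ha.ne' hft.symm)
  have hmin : IsLocalMinOn f (Ico a b) t :=
    IsMinOn.localize fun x hx => by simpa [← hft] using hnonneg x hx
  have hcone : a - t ∈ posTangentConeAt (Ico a b) t :=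
    sub_mem_posTangentConeAt_of_segment_subset <| by
      rw [segment_symm, segment_eq_Icc hat.le]
      exact Icc_subset_Ico_right ht.2
  have hdir := hmin.hasFDerivWithinAt_nonneg (hf t ht).hasFDerivWithinAt hcone
  simp only [ContinuousLinearMap.toSpanSingleton_apply, smul_eq_mul] at hdir
  nlinarith [hzero t ht hft.symm]

theorem stmt3_general (I : ℕ) (C₀ a σD α : ℝ)
    (h₀ τ : ℝ) (h f g : ℝ → ℝ)
    (hsol : FwdSol I C₀ a σD α h₀ h f g (Ico 0 τ)) :
    ∀ t ∈ Ico (0 : ℝ) τ, 0 < f t := by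
  obtain ⟨-, hf0, -, hderiv⟩ := hsol
  exact pos_of_hasDerivWithinAt_pos_of_eq_zero (hf0 ▸ one_pos) (fun t ht => (hderiv t ht).2.1)
    fun t _ hft => by simp [hft]

/-- for any initial value `h₀`, any solution of the forward ODE system on its
(maximal) interval of existence `[0,τ)` has `f > 0` there. -/
theorem stmt3 (I : ℕ) (hI : 1 ≤ I) (C₀ T a σD α k : ℝ)
    (hT : 0 < T) (ha : 0 < a) (hσD : 0 < σD) (hα : 0 < α) (hk : 0 < k)
    (h₀ τ : ℝ) (hτ : 0 < τ) (h f g : ℝ → ℝ)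
    (hsol : FwdSol I C₀ a σD α h₀ h f g (Ico 0 τ)) :
    ∀ t ∈ Ico (0 : ℝ) τ, 0 < f t :=
  stmt3_general I C₀ a σD α h₀ τ h f g hsol
end

section
/- If h₀ ≥ 0, then the maximal solution (h, f, g) of the forward ODE system satisfies h(t) ≥ 0, g(t) ≥ 0, and f(t) ≥ C₁ > 0 for all t in the maximal interval of existence [0, τ(h₀)). -/
/-!
Positivity propagates through the system in a triangular order. `h` solves the linear equation
`h' = (2g/α) h`, so it cannot change sign: by Grönwall, a solution vanishing at one time vanishes
afterwards. Knowing `h ≥ 0`, the barrier `f' = 1` at zeros of `f` gives `f ≥ 0`, hence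
`f' ≥ 1 - C₀ f`; since `C₁ ≤ 1` and `C₀ C₁ ≤ 1`, the function `u = C₁ - f` satisfies
`u(0) ≤ 0` and `u' ≤ -C₀ u`, and Grönwall gives `f ≥ C₁`. Finally `g' = a σ_D² f > 0` at zeros
of `g`, so `g ≥ 0`.
-/

open Set

section Comparison

variable {φ φ' : ℝ → ℝ} {a b : ℝ}

lemma continuousOn_Icc_of_hasDerivWithinAt_Ico
    (hφ : ∀ x ∈ Ico a b, HasDerivWithinAt φ (φ' x) (Ico a b) x) {t : ℝ} (ht : t ∈ Ico a b) :
    ContinuousOn φ (Icc a t) :=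
  fun x hx => ((hφ x (Icc_subset_Ico_right ht.2 hx)).continuousWithinAt).mono
    (Icc_subset_Ico_right ht.2)

lemma hasDerivWithinAt_Ici_of_mem_Ico
    (hφ : ∀ x ∈ Ico a b, HasDerivWithinAt φ (φ' x) (Ico a b) x) {t : ℝ} (ht : t ∈ Ico a b) :
    ∀ x ∈ Ico a t, HasDerivWithinAt φ (φ' x) (Ici x) x := fun x hx =>
  have hx' : x ∈ Ico a b := Ico_subset_Ico_right ht.2.le hx
  (hφ x hx').mono_of_mem_nhdsWithin (Ico_mem_nhdsGE_of_mem hx')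

lemma nonneg_of_deriv_pos_of_eq_zero
    (hφ : ∀ x ∈ Ico a b, HasDerivWithinAt φ (φ' x) (Ico a b) x) (ha : 0 ≤ φ a)
    (hpos : ∀ x ∈ Ico a b, φ x = 0 → 0 < φ' x) :
    ∀ t ∈ Ico a b, 0 ≤ φ t := fun _ ht =>
  image_le_of_deriv_right_lt_deriv_boundary' (f' := fun _ => 0) continuousOn_const
    (fun _ _ => hasDerivWithinAt_const _ _ _) ha (continuousOn_Icc_of_hasDerivWithinAt_Ico hφ ht)
    (hasDerivWithinAt_Ici_of_mem_Ico hφ ht)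
    (fun x hx hx0 => hpos x (Ico_subset_Ico_right ht.2.le hx) hx0.symm) ⟨ht.1, le_rfl⟩

lemma nonpos_of_deriv_le_mul_self {K : ℝ}
    (hφ : ∀ x ∈ Ico a b, HasDerivWithinAt φ (φ' x) (Ico a b) x) (ha : φ a ≤ 0)
    (hle : ∀ x ∈ Ico a b, φ' x ≤ K * φ x) :
    ∀ t ∈ Ico a b, φ t ≤ 0 := by
  intro t ht
  have hbound := le_gronwallBound_of_liminf_deriv_right_le (δ := 0) (ε := 0)
    (continuousOn_Icc_of_hasDerivWithinAt_Ico hφ ht)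
    (fun x hx _ hr => (hasDerivWithinAt_Ici_of_mem_Ico hφ ht x hx).liminf_right_slope_le hr) ha
    (fun x hx => by simpa using hle x (Ico_subset_Ico_right ht.2.le hx)) t ⟨ht.1, le_rfl⟩
  rwa [gronwallBound_ε0_δ0] at hbound

lemma nonneg_of_deriv_eq_mul_self {c : ℝ → ℝ}
    (hφ : ∀ x ∈ Ico a b, HasDerivWithinAt φ (c x * φ x) (Ico a b) x)
    (hc : ContinuousOn c (Ico a b)) (ha : 0 ≤ φ a) :
    ∀ t ∈ Ico a b, 0 ≤ φ t := by
  intro t ht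
  by_contra! hneg
  obtain ⟨t₀, ht₀, hφt₀⟩ : ∃ t₀ ∈ Icc a t, φ t₀ = 0 :=
    intermediate_value_Icc' ht.1 (continuousOn_Icc_of_hasDerivWithinAt_Ico hφ ht)
      ⟨hneg.le, ha⟩
  have hsub : Ico t₀ b ⊆ Ico a b := Ico_subset_Ico_left ht₀.1
  have ht' : t ∈ Ico t₀ b := ⟨ht₀.2, ht.2⟩
  have hφ' : ∀ x ∈ Ico t₀ b, HasDerivWithinAt φ (c x * φ x) (Ico t₀ b) x :=
    fun x hx => (hφ x (hsub hx)).mono hsub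
  obtain ⟨K, hK⟩ := isCompact_Icc.exists_bound_of_continuousOn
    (hc.mono ((Icc_subset_Ico_right ht.2).trans hsub))
  have hvanish := eq_zero_of_abs_deriv_le_mul_abs_self_of_eq_zero_right (K := K)
    (continuousOn_Icc_of_hasDerivWithinAt_Ico hφ' ht')
    (hasDerivWithinAt_Ici_of_mem_Ico hφ' ht') hφt₀
    (fun x hx => by
      rw [norm_mul]
      exact mul_le_mul_of_nonneg_right (hK x (Ico_subset_Icc_self hx)) (norm_nonneg _))
    t ⟨ht₀.2, le_rfl⟩
  exact hneg.ne hvanish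

end Comparison

theorem stmt4_general (I : ℕ) (C₀ a σD α : ℝ)
    (ha : 0 < a) (hσD : 0 < σD)
    (h₀ τ : ℝ) (hh₀ : 0 ≤ h₀) (h f g : ℝ → ℝ)
    (hsol : FwdSol I C₀ a σD α h₀ h f g (Ico 0 τ))
    (C₁ : ℝ) (hC₁ : C₁ = if C₀ ≤ 1 then 1 else 1 / C₀) :
    0 < C₁ ∧ ∀ t ∈ Ico (0 : ℝ) τ, 0 ≤ h t ∧ 0 ≤ g t ∧ C₁ ≤ f t := by
  obtain ⟨h_zero, f_zero, g_zero, hder⟩ := hsol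
  obtain ⟨hC₁_pos, hC₁_le_one, hC₀C₁⟩ : 0 < C₁ ∧ C₁ ≤ 1 ∧ C₀ * C₁ ≤ 1 := by
    subst hC₁
    split_ifs with hC₀
    · norm_num [hC₀]
    · have hC₀ : 1 < C₀ := not_le.1 hC₀
      refine ⟨by positivity, (div_le_one (by positivity)).2 hC₀.le, ?_⟩
      rw [mul_one_div_cancel (by positivity)]
  have hg_cont : ContinuousOn g (Ico 0 τ) := fun t ht => (hder t ht).2.2.continuousWithinAt
  have hh : ∀ t ∈ Ico 0 τ, 0 ≤ h t := nonneg_of_deriv_eq_mul_self (c := fun t => 2 * g t / α)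
    (fun t ht => (hder t ht).1) ((continuousOn_const.mul hg_cont).div_const α) (h_zero ▸ hh₀)
  have hf_nonneg : ∀ t ∈ Ico 0 τ, 0 ≤ f t := nonneg_of_deriv_pos_of_eq_zero
    (fun t ht => (hder t ht).2.1) (by rw [f_zero]; norm_num)
    (fun t _ hft => by rw [hft]; norm_num)
  have hf : ∀ t ∈ Ico 0 τ, C₁ - f t ≤ 0 := nonpos_of_deriv_le_mul_self (K := -C₀)
    (fun t ht => (hasDerivWithinAt_const _ _ C₁).sub (hder t ht).2.1) (by rw [f_zero]; linarith)
    (fun t ht => by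
      have : 0 ≤ a ^ 2 * σD ^ 2 / (2 * (I : ℝ)) * h t * f t :=
        mul_nonneg (mul_nonneg (by positivity) (hh t ht)) (hf_nonneg t ht)
      linarith)
  have hg : ∀ t ∈ Ico 0 τ, 0 ≤ g t := nonneg_of_deriv_pos_of_eq_zero
    (fun t ht => (hder t ht).2.2) g_zero.ge
    (fun t ht hgt => by
      have : 0 < f t := hC₁_pos.trans_le (by linarith [hf t ht])
      rw [hgt]; simpa using (by positivity : 0 < a * σD ^ 2 * f t))
  exact ⟨hC₁_pos, fun t ht => ⟨hh t ht, hg t ht, by linarith [hf t ht]⟩⟩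

/-- if `h₀ ≥ 0` then the solution of the forward ODE system satisfies
`h ≥ 0`, `g ≥ 0` and `f ≥ C₁ > 0` on its (maximal) interval of existence `[0,τ)`. -/
theorem stmt4 (I : ℕ) (hI : 1 ≤ I) (C₀ T a σD α k : ℝ)
    (hT : 0 < T) (ha : 0 < a) (hσD : 0 < σD) (hα : 0 < α) (hk : 0 < k)
    (h₀ τ : ℝ) (hh₀ : 0 ≤ h₀) (hτ : 0 < τ) (h f g : ℝ → ℝ)
    (hsol : FwdSol I C₀ a σD α h₀ h f g (Ico 0 τ))
    (C₁ : ℝ) (hC₁ : C₁ = if C₀ ≤ 1 then 1 else 1 / C₀) :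
    0 < C₁ ∧ ∀ t ∈ Ico (0 : ℝ) τ, 0 ≤ h t ∧ 0 ≤ g t ∧ C₁ ≤ f t :=
  stmt4_general I C₀ a σD α ha hσD h₀ τ hh₀ h f g hsol C₁ hC₁
end

section
/- If h₀ > 0, then the component h of the maximal solution (h, f, g) of the forward ODE system satisfies the global lower bound h(t) ≥ h₀ · exp( (2/α) ∫₀^t min((a σ_D² C₁/2)·s, C₂) ds ) for all t in the maximal interval of existence [0, τ(h₀)). -/
/-!
Since `h' = (2g/α) h`, we have `h = h₀ exp((2/α) ∫₀ᵗ g)`, so `h > 0` and it suffices to bound `g`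
from below by the ramp `min (c s) C₂`, `c = a σ_D² C₁ / 2`. This and the auxiliary bound `f ≥ C₁`
are barrier arguments: wherever the solution touches the barrier, its derivative is strictly
larger than the barrier's. For `f` this uses `C₁ C₀ ≤ 1` and `h > 0`; for `g` it uses `f ≥ C₁`
together with `(2/α) y² + C₀ y ≤ c` on `[0, C₂]`, which is how `C₂` is chosen.
-/

open Set Filter Topology MeasureTheory

section RightDerivatives

variable {a b : ℝ}

lemma HasDerivWithinAt.Ici_of_Ico {f : ℝ → ℝ} {f' x : ℝ} (hf : HasDerivWithinAt f f' (Ico a b) x)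
    (hx : x ∈ Ico a b) : HasDerivWithinAt f f' (Ici x) x :=
  hf.mono_of_mem_nhdsWithin (Ico_mem_nhdsGE_of_mem hx)

lemma ContinuousOn.hasDerivWithinAt_Ici_integral {p : ℝ → ℝ} (hp : ContinuousOn p (Ico a b))
    {x : ℝ} (hx : x ∈ Ico a b) : HasDerivWithinAt (fun u ↦ ∫ s in a..u, p s) (p x) (Ici x) x := by
  have hIoi : Ico a b ∈ 𝓝[>] x := nhdsWithin_mono x Ioi_subset_Ici_self (Ico_mem_nhdsGE_of_mem hx)
  refine intervalIntegral.integral_hasDerivWithinAt_right ?_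
    ⟨Ico a b, hIoi, hp.aestronglyMeasurable measurableSet_Ico⟩
    ((hp x hx).mono_of_mem_nhdsWithin hIoi)
  refine ContinuousOn.intervalIntegrable (hp.mono ?_)
  rw [uIcc_of_le hx.1]
  exact Icc_subset_Ico_right hx.2

lemma ContinuousOn.continuousOn_Icc_integral {p : ℝ → ℝ} (hp : ContinuousOn p (Ico a b))
    {t : ℝ} (ht : t ∈ Ico a b) : ContinuousOn (fun u ↦ ∫ s in a..u, p s) (Icc a t) := by
  have := intervalIntegral.continuousOn_primitive_interval (μ := volume)
    (by rw [uIcc_of_le ht.1]; exact (hp.mono (Icc_subset_Ico_right ht.2)).integrableOn_Icc)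
  rwa [uIcc_of_le ht.1] at this

theorem eq_mul_exp_integral_of_hasDerivWithinAt {h p : ℝ → ℝ} (hp : ContinuousOn p (Ico a b))
    (hh : ∀ x ∈ Ico a b, HasDerivWithinAt h (p x * h x) (Ico a b) x) :
    ∀ t ∈ Ico a b, h t = h a * Real.exp (∫ s in a..t, p s) := by
  intro t ht
  set w : ℝ → ℝ := fun u ↦ h u * Real.exp (-∫ s in a..u, p s)
  have hw : ∀ x ∈ Icc a t, w x = w a := by
    refine constant_of_has_deriv_right_zero ?_ fun x hx ↦ ?_
    · have hch : ContinuousOn h (Icc a t) := fun x hx ↦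
        (hh x ⟨hx.1, hx.2.trans_lt ht.2⟩).continuousWithinAt.mono (Icc_subset_Ico_right ht.2)
      exact hch.mul (hp.continuousOn_Icc_integral ht).neg.rexp
    · have hx' : x ∈ Ico a b := ⟨hx.1, hx.2.trans ht.2⟩
      exact (((hh x hx').Ici_of_Ico hx').fun_mul
        (hp.hasDerivWithinAt_Ici_integral hx').fun_neg.exp).congr_deriv (by ring)
  have hwt := hw t (right_mem_Icc.2 ht.1)
  simp only [w, intervalIntegral.integral_same, neg_zero, Real.exp_zero, mul_one] at hwt
  rw [← hwt, mul_assoc, ← Real.exp_add, neg_add_cancel, Real.exp_zero, mul_one]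

theorem le_of_deriv_right_lt_of_eq_Ico {u u' v v' : ℝ → ℝ} (hu : ContinuousOn u (Ico a b))
    (hu' : ∀ x ∈ Ico a b, HasDerivWithinAt u (u' x) (Ici x) x)
    (hv' : ∀ x ∈ Ico a b, HasDerivWithinAt v (v' x) (Ico a b) x) (ha : u a ≤ v a)
    (hcontact : ∀ x ∈ Ico a b, u x = v x → u' x < v' x) : ∀ x ∈ Ico a b, u x ≤ v x := by
  intro t ht
  have hsub : Icc a t ⊆ Ico a b := Icc_subset_Ico_right ht.2
  have hsub' : Ico a t ⊆ Ico a b := fun x hx ↦ hsub (Ico_subset_Icc_self hx)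
  refine image_le_of_deriv_right_lt_deriv_boundary' (hu.mono hsub) (fun x hx ↦ hu' x (hsub' hx))
    ha (fun x hx ↦ (hv' x (hsub hx)).continuousWithinAt.mono hsub)
    (fun x hx ↦ (hv' x (hsub' hx)).Ici_of_Ico (hsub' hx)) (fun x hx ↦ hcontact x (hsub' hx))
    (right_mem_Icc.2 ht.1)

end RightDerivatives

lemma hasDerivWithinAt_Ici_min_mul {c C : ℝ} (hc : 0 ≤ c) (x : ℝ) :
    HasDerivWithinAt (fun u ↦ min (c * u) C) (if c * x < C then c else 0) (Ici x) x := by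
  split_ifs with hx
  · have hev : (fun u ↦ min (c * u) C) =ᶠ[𝓝 x] fun u ↦ c * u :=
      ((continuous_const.mul continuous_id).continuousAt.eventually_lt continuousAt_const hx).mono
        fun u hu ↦ min_eq_left hu.le
    simpa using ((hasDerivAt_id x).const_mul c).congr_of_eventuallyEq hev |>.hasDerivWithinAt
  · push Not at hx
    exact (hasDerivWithinAt_const x _ C).congr (fun u hu ↦ min_eq_right
      (hx.trans (mul_le_mul_of_nonneg_left hu hc))) (min_eq_right hx)

section Constants

variable {C₀ C₁ : ℝ}

lemma pos_of_eq_ite_one_div (hC₁ : C₁ = if C₀ ≤ 1 then 1 else 1 / C₀) : 0 < C₁ := by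
  split_ifs at hC₁ with h <;> rw [hC₁]
  · exact one_pos
  · exact one_div_pos.2 (by linarith)

lemma le_one_of_eq_ite_one_div (hC₁ : C₁ = if C₀ ≤ 1 then 1 else 1 / C₀) : C₁ ≤ 1 := by
  split_ifs at hC₁ with h <;> rw [hC₁]
  · exact (div_le_one (by linarith)).2 (by linarith)

lemma mul_le_one_of_eq_ite_one_div (hC₁ : C₁ = if C₀ ≤ 1 then 1 else 1 / C₀) : C₁ * C₀ ≤ 1 := by
  split_ifs at hC₁ with h <;> rw [hC₁]
  · simpa using h
  · rw [one_div_mul_cancel (by linarith)]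

variable {α K C₂ : ℝ}

/-- `C₂` is the positive root of `(2/α) y² + C₀ y = K/2` when `C₀ ≥ 0`, and the positive root
of `(2/α) y² + C₀ y = 0` when `C₀ < 0`. -/
lemma pos_and_quadratic_le_of_eq_ite (hα : 0 < α) (hK : 0 < K)
    (hC₂ : C₂ = if C₀ < 0 then -(α * C₀) / 2 else α * (-C₀ + √(C₀ ^ 2 + 4 * K / α)) / 4) :
    0 < C₂ ∧ 2 / α * C₂ ^ 2 + C₀ * C₂ ≤ K / 2 := by
  split_ifs at hC₂ with h <;> subst hC₂
  · refine ⟨by nlinarith, le_of_eq_of_le (b := 0) ?_ (by positivity)⟩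
    field_simp
    ring
  · push Not at h
    set s := √(C₀ ^ 2 + 4 * K / α)
    have hs : C₀ < s := calc
      C₀ = √(C₀ ^ 2) := (Real.sqrt_sq h).symm
      _ < s := Real.sqrt_lt_sqrt (sq_nonneg _) (by linarith [show 0 < 4 * K / α by positivity])
    refine ⟨by nlinarith, le_of_eq ?_⟩
    have hsq : α * s ^ 2 = α * C₀ ^ 2 + 4 * K := by
      rw [Real.sq_sqrt (by positivity)]
      field_simp
    field_simp
    linear_combination (4 : ℝ) * hsq

end Constants

lemma quadratic_lt_of_lt_of_quadratic_le {β C₀ K C₂ y : ℝ} (hβ : 0 ≤ β) (hK : 0 < K)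
    (hQ : β * C₂ ^ 2 + C₀ * C₂ ≤ K) (hy₀ : 0 ≤ y) (hy : y < C₂) : β * y ^ 2 + C₀ * y < K := by
  have hC₂ : 0 < C₂ := hy₀.trans_lt hy
  -- `(β y² + C₀ y) / y = β y + C₀` is nondecreasing in `y`
  have hslope : C₂ * (β * y ^ 2 + C₀ * y) ≤ y * (β * C₂ ^ 2 + C₀ * C₂) := by
    nlinarith [mul_nonneg (mul_nonneg hβ hy₀) (mul_nonneg hC₂.le (sub_pos.2 hy).le)]
  have : C₂ * (β * y ^ 2 + C₀ * y) < C₂ * K := by nlinarith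
  exact lt_of_mul_lt_mul_left this hC₂.le

namespace FwdSol

variable {I : ℕ} {C₀ a σD α h₀ τ : ℝ} {h f g : ℝ → ℝ}

lemma continuousOn_g (hsol : FwdSol I C₀ a σD α h₀ h f g (Ico 0 τ)) : ContinuousOn g (Ico 0 τ) :=
  fun x hx ↦ (hsol.2.2.2 x hx).2.2.continuousWithinAt

lemma h_eq (hsol : FwdSol I C₀ a σD α h₀ h f g (Ico 0 τ)) :
    ∀ t ∈ Ico 0 τ, h t = h₀ * Real.exp (2 / α * ∫ s in (0 : ℝ)..t, g s) := by
  intro t ht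
  rw [← intervalIntegral.integral_const_mul, ← hsol.1]
  exact eq_mul_exp_integral_of_hasDerivWithinAt (p := fun s ↦ 2 / α * g s)
    (continuousOn_const.mul hsol.continuousOn_g)
    (fun x hx ↦ (hsol.2.2.2 x hx).1.congr_deriv (by ring)) t ht

lemma h_pos (hsol : FwdSol I C₀ a σD α h₀ h f g (Ico 0 τ)) (hh₀ : 0 < h₀) :
    ∀ t ∈ Ico 0 τ, 0 < h t := fun t ht ↦ by
  rw [hsol.h_eq t ht]
  positivity

lemma const_le_f (hsol : FwdSol I C₀ a σD α h₀ h f g (Ico 0 τ)) (hh₀ : 0 < h₀)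
    (hcoef : 0 < a ^ 2 * σD ^ 2 / (2 * (I : ℝ))) {C₁ : ℝ} (hC₁ : 0 < C₁) (hC₁_le : C₁ ≤ 1)
    (hC₁C₀ : C₁ * C₀ ≤ 1) : ∀ t ∈ Ico 0 τ, C₁ ≤ f t := by
  refine le_of_deriv_right_lt_of_eq_Ico continuousOn_const
    (fun x _ ↦ hasDerivWithinAt_const x _ C₁) (fun x hx ↦ (hsol.2.2.2 x hx).2.1)
    (by rw [hsol.2.1]; exact hC₁_le) fun x hx hfx ↦ ?_
  have := mul_pos hC₁ (mul_pos hcoef (hsol.h_pos hh₀ x hx))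
  rw [← hfx]
  nlinarith

lemma min_le_g (hsol : FwdSol I C₀ a σD α h₀ h f g (Ico 0 τ)) (hh₀ : 0 < h₀) (ha : 0 < a)
    (hσD : 0 < σD) (hα : 0 < α) {C₁ C₂ : ℝ} (hC₁ : 0 < C₁) (hf : ∀ t ∈ Ico 0 τ, C₁ ≤ f t)
    (hC₂ : 0 < C₂) (hQ : 2 / α * C₂ ^ 2 + C₀ * C₂ ≤ a * σD ^ 2 * C₁ / 2) :
    ∀ t ∈ Ico 0 τ, min (a * σD ^ 2 * C₁ / 2 * t) C₂ ≤ g t := by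
  set c := a * σD ^ 2 * C₁ / 2 with hc_def
  have hc : 0 < c := by positivity
  refine le_of_deriv_right_lt_of_eq_Ico
    ((continuous_const.mul continuous_id).min continuous_const).continuousOn
    (fun x _ ↦ hasDerivWithinAt_Ici_min_mul hc.le x) (fun x hx ↦ (hsol.2.2.2 x hx).2.2)
    (by rw [hsol.2.2.1, mul_zero]; exact min_le_left _ _) fun x hx hgx ↦ ?_
  have hg₀ : 0 ≤ g x := hgx ▸ le_min (mul_nonneg hc.le hx.1) hC₂.le
  have hgP : 0 ≤ g x * (a ^ 2 * σD ^ 2 / (2 * (I : ℝ)) * h x) :=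
    mul_nonneg hg₀ (mul_nonneg (by positivity) (hsol.h_pos hh₀ x hx).le)
  have hfx : a * σD ^ 2 * C₁ ≤ a * σD ^ 2 * f x :=
    mul_le_mul_of_nonneg_left (hf x hx) (by positivity)
  split_ifs with hcx
  · have hgc : g x = c * x := by rw [← hgx, min_eq_left hcx.le]
    have := quadratic_lt_of_lt_of_quadratic_le (by positivity) hc hQ hg₀ (hgc ▸ hcx)
    linarith
  · have hgC : g x = C₂ := by rw [← hgx, min_eq_right (not_lt.1 hcx)]
    rw [hgC] at hgP ⊢
    linarith

end FwdSol

theorem stmt6_general (I : ℕ) (hI : 1 ≤ I) (C₀ a σD α : ℝ)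
    (ha : 0 < a) (hσD : 0 < σD) (hα : 0 < α)
    (h₀ τ : ℝ) (hh₀ : 0 < h₀) (h f g : ℝ → ℝ)
    (hsol : FwdSol I C₀ a σD α h₀ h f g (Ico 0 τ))
    (C₁ : ℝ) (hC₁ : C₁ = if C₀ ≤ 1 then 1 else 1 / C₀)
    (C₂ : ℝ) (hC₂ : C₂ = if C₀ < 0 then -(α * C₀) / 2
      else α * (-C₀ + Real.sqrt (C₀ ^ 2 + 4 * a * σD ^ 2 * C₁ / α)) / 4) :
    ∀ t ∈ Ico (0 : ℝ) τ,
      h₀ * Real.exp (2 / α * ∫ s in (0 : ℝ)..t, min (a * σD ^ 2 * C₁ / 2 * s) C₂) ≤ h t := by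
  intro t ht
  have hC₁_pos := pos_of_eq_ite_one_div hC₁
  obtain ⟨hC₂_pos, hQ⟩ := pos_and_quadratic_le_of_eq_ite (C₀ := C₀) hα
    (by positivity : 0 < a * σD ^ 2 * C₁) (hC₂.trans (by simp only [mul_assoc]))
  have hI_pos : (0 : ℝ) < I := by exact_mod_cast hI
  have hf := hsol.const_le_f hh₀ (by positivity) hC₁_pos (le_one_of_eq_ite_one_div hC₁)
    (mul_le_one_of_eq_ite_one_div hC₁)
  have hg := hsol.min_le_g hh₀ ha hσD hα hC₁_pos hf hC₂_pos hQ
  rw [hsol.h_eq t ht]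
  gcongr
  refine intervalIntegral.integral_mono_on ht.1 (Continuous.intervalIntegrable (by fun_prop) _ _)
    ((hsol.continuousOn_g.mono (Icc_subset_Ico_right ht.2)).intervalIntegrable_of_Icc ht.1)
    fun s hs ↦ hg s (Icc_subset_Ico_right ht.2 hs)

/-- if `h₀ > 0` then `h` satisfies the global lower bound
`h t ≥ h₀ · exp((2/α) ∫₀ᵗ min ((a σ_D² C₁/2)·s) C₂ ds)` on the (maximal) interval of
existence `[0,τ)`. -/
theorem stmt6 (I : ℕ) (hI : 1 ≤ I) (C₀ T a σD α k : ℝ)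
    (hT : 0 < T) (ha : 0 < a) (hσD : 0 < σD) (hα : 0 < α) (hk : 0 < k)
    (h₀ τ : ℝ) (hh₀ : 0 < h₀) (hτ : 0 < τ) (h f g : ℝ → ℝ)
    (hsol : FwdSol I C₀ a σD α h₀ h f g (Ico 0 τ))
    (C₁ : ℝ) (hC₁ : C₁ = if C₀ ≤ 1 then 1 else 1 / C₀)
    (C₂ : ℝ) (hC₂ : C₂ = if C₀ < 0 then -(α * C₀) / 2
      else α * (-C₀ + Real.sqrt (C₀ ^ 2 + 4 * a * σD ^ 2 * C₁ / α)) / 4) :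
    ∀ t ∈ Ico (0 : ℝ) τ,
      h₀ * Real.exp (2 / α * ∫ s in (0 : ℝ)..t, min (a * σD ^ 2 * C₁ / 2 * s) C₂) ≤ h t :=
  stmt6_general I hI C₀ a σD α ha hσD hα h₀ τ hh₀ h f g hsol C₁ hC₁ C₂ hC₂
end

section
/- The hitting-time map (0, k) ∋ h₀ ↦ T_{h=k}(h₀) is strictly decreasing: if 0 < h₀ < h̃₀ < k then T_{h=k}(h̃₀) < T_{h=k}(h₀). -/
/-!
If `h₀ < h̃₀`, the differences `(f̃ - f, g̃ - g, h̃ - h)` of the two solutions solve a linear system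
`x' = A x` whose off-diagonal coefficients are nonnegative, because `f`, `g` and `h̃` stay
nonnegative. Such a cooperative system preserves the nonnegative orthant, so all three differences
stay nonnegative, and then `(h̃ - h)' = (2/α)(h̃ (g̃ - g) + g (h̃ - h)) ≥ 0` keeps `h̃ - h` above
`h̃₀ - h₀ > 0`. Hence `h̃ > k` at the hitting time of `h`, and by the intermediate value theorem
`h̃` reaches `k` strictly earlier.
-/

open Set Filter Topology

theorem HasDerivWithinAt.eventually_lt_of_deriv_pos {f : ℝ → ℝ} {f' x : ℝ}
    (hf : HasDerivWithinAt f f' (Ioi x) x) (hf' : 0 < f') : ∀ᶠ y in 𝓝[>] x, f x < f y := by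
  have hslope := (hasDerivWithinAt_iff_tendsto_slope' (lt_irrefl x)).1 hf
  filter_upwards [hslope.eventually (lt_mem_nhds hf'), self_mem_nhdsWithin] with y hy hxy
  rw [slope_def_field] at hy
  exact sub_pos.1 ((div_pos_iff_of_pos_right (sub_pos.2 hxy)).1 hy)

theorem nonneg_of_hasDerivWithinAt_of_forall_min {ι : Type*} [Finite ι] {a b K : ℝ}
    {x d : ι → ℝ → ℝ}
    (hx : ∀ i, ∀ t ∈ Icc a b, HasDerivWithinAt (x i) (d i t) (Icc a b) t)
    (hd : ∀ i, ∀ t ∈ Icc a b, x i t < 0 → (∀ j, x i t ≤ x j t) → K * x i t ≤ d i t)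
    (ha : ∀ i, 0 ≤ x i a) : ∀ i, ∀ t ∈ Icc a b, 0 ≤ x i t := by
  -- `x + ε e^{(K+1)t}` stays nonnegative: where one of its components vanishes, that component
  -- of `x` is a negative minimum, so its derivative is `≥ ε e^{(K+1)t} > 0`.
  have key : ∀ ε > 0, ∀ t ∈ Icc a b, ∀ i, 0 ≤ x i t + ε * Real.exp ((K + 1) * t) := by
    intro ε hε
    set y : ℝ → ι → ℝ := fun t i => x i t + ε * Real.exp ((K + 1) * t) with hy_def
    have hy : ∀ i, ∀ t ∈ Icc a b, HasDerivWithinAt (fun s => y s i)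
        (d i t + ε * (Real.exp ((K + 1) * t) * (K + 1))) (Icc a b) t := fun i t ht =>
      (hx i t ht).add (((hasDerivAt_id' t).const_mul (K + 1)).exp.const_mul ε
        |>.hasDerivWithinAt |>.congr_deriv (by ring))
    have hyc : ContinuousOn y (Icc a b) :=
      continuousOn_pi.2 fun i t ht => (hy i t ht).continuousWithinAt
    have hclosed : IsClosed (y ⁻¹' Ici 0 ∩ Icc a b) := by
      rw [Set.inter_comm]; exact hyc.preimage_isClosed_of_isClosed isClosed_Icc isClosed_Ici
    have hstart : a ∈ y ⁻¹' Ici 0 := fun i => add_nonneg (ha i) (by positivity)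
    intro t ht
    refine hclosed.Icc_subset_of_forall_mem_nhdsWithin hstart (fun s hs => ?_) ht
    have hIcc : Icc a b ∈ 𝓝[>] s := Icc_mem_nhdsGT_of_mem hs.2
    have hsIcc : s ∈ Icc a b := Ico_subset_Icc_self hs.2
    refine eventually_all.2 fun i => ?_
    have hyi := (hy i s hsIcc).mono_of_mem_nhdsWithin hIcc
    rcases (hs.1 i).lt_or_eq with hpos | hzero
    · exact (hyi.continuousWithinAt.eventually (eventually_gt_nhds hpos)).mono fun _ h => h.le
    · have hc : 0 < ε * Real.exp ((K + 1) * s) := by positivity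
      have hxi : x i s = -(ε * Real.exp ((K + 1) * s)) := by
        simp only [hy_def, Pi.zero_apply] at hzero; linarith
      have hmin : ∀ j, x i s ≤ x j s := fun j => by
        have := hs.1 j; simp only [hy_def, Pi.zero_apply] at this; linarith
      have hdi := hd i s hsIcc (by linarith) hmin
      rw [hxi] at hdi
      refine (hyi.eventually_lt_of_deriv_pos (by nlinarith)).mono fun _ h => ?_
      rw [← hzero] at h; exact h.le
  intro i t ht
  refine le_of_forall_pos_le_add fun δ hδ => ?_
  have := key (δ / Real.exp ((K + 1) * t)) (by positivity) t ht i
  rwa [div_mul_cancel₀ _ (Real.exp_pos _).ne'] at this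

open Finset in
theorem nonneg_of_hasDerivWithinAt_of_metzler {ι : Type*} [Fintype ι] {a b : ℝ}
    {x d : ι → ℝ → ℝ} {A : ι → ι → ℝ → ℝ}
    (hx : ∀ i, ∀ t ∈ Icc a b, HasDerivWithinAt (x i) (d i t) (Icc a b) t)
    (hA : ∀ i j, ContinuousOn (A i j) (Icc a b))
    (hA_nonneg : ∀ i j, i ≠ j → ∀ t ∈ Icc a b, 0 ≤ A i j t)
    (hd : ∀ i, ∀ t ∈ Icc a b, ∑ j, A i j t * x j t ≤ d i t)
    (ha : ∀ i, 0 ≤ x i a) : ∀ i, ∀ t ∈ Icc a b, 0 ≤ x i t := by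
  obtain ⟨K, hK⟩ := isCompact_Icc.bddAbove_image (f := fun t => ∑ i, ∑ j, |A i j t|)
    (continuousOn_finsetSum _ fun i _ => continuousOn_finsetSum _ fun j _ => (hA i j).abs)
  refine nonneg_of_hasDerivWithinAt_of_forall_min (K := K) hx (fun i t ht hneg hmin => ?_) ha
  have hrow : ∑ j, A i j t ≤ K := calc
    ∑ j, A i j t ≤ ∑ j, |A i j t| := sum_le_sum fun j _ => le_abs_self _
    _ ≤ ∑ i, ∑ j, |A i j t| :=
      single_le_sum (f := fun i => ∑ j, |A i j t|)
        (fun i _ => sum_nonneg fun j _ => abs_nonneg _) (mem_univ i)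
    _ ≤ K := hK (mem_image_of_mem _ ht)
  calc K * x i t ≤ (∑ j, A i j t) * x i t := mul_le_mul_of_nonpos_right hrow hneg.le
    _ = ∑ j, A i j t * x i t := sum_mul ..
    _ ≤ ∑ j, A i j t * x j t := sum_le_sum fun j _ => by
        rcases eq_or_ne i j with rfl | hij
        · exact le_rfl
        · exact mul_le_mul_of_nonneg_left (hmin j) (hA_nonneg i j hij t ht)
    _ ≤ d i t := hd i t ht

theorem nonneg_of_hasDerivWithinAt_of_mul_le {a b : ℝ} {x d c : ℝ → ℝ}
    (hx : ∀ t ∈ Icc a b, HasDerivWithinAt x (d t) (Icc a b) t)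
    (hc : ContinuousOn c (Icc a b)) (hd : ∀ t ∈ Icc a b, c t * x t ≤ d t) (ha : 0 ≤ x a) :
    ∀ t ∈ Icc a b, 0 ≤ x t :=
  nonneg_of_hasDerivWithinAt_of_metzler (ι := Unit) (x := fun _ => x) (d := fun _ => d)
    (A := fun _ _ => c) (fun _ => hx) (fun _ _ => hc) (fun _ _ h => (h rfl).elim)
    (fun _ t ht => by simpa using hd t ht) (fun _ => ha) ()

theorem csInf_mem_of_isClosed_inter_Iic {α : Type*} [ConditionallyCompleteLinearOrder α]
    [TopologicalSpace α] [OrderTopology α] {S : Set α} (hne : S.Nonempty) (hbdd : BddBelow S)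
    (hcl : ∀ b ∈ S, IsClosed (S ∩ Iic b)) : sInf S ∈ S := by
  obtain ⟨b, hb⟩ := hne
  have hm := (hcl b hb).csInf_mem ⟨b, hb, le_rfl⟩ (hbdd.mono inter_subset_left)
  have hleast : IsLeast S (sInf (S ∩ Iic b)) := by
    refine ⟨hm.1, fun s hs => ?_⟩
    rcases le_total s b with hsb | hbs
    · exact csInf_le (hbdd.mono inter_subset_left) ⟨hs, hsb⟩
    · exact hm.2.trans hbs
  exact hleast.csInf_eq ▸ hm.1

theorem Icc_subset_setOf_coe_lt {τ : WithTop ℝ} {b : ℝ} (hb : (b : WithTop ℝ) < τ) :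
    Icc 0 b ⊆ {t : ℝ | 0 ≤ t ∧ (t : WithTop ℝ) < τ} :=
  fun _ ht => ⟨ht.1, (WithTop.coe_le_coe.2 ht.2).trans_lt hb⟩

theorem csInf_hitting_mem {y : ℝ → ℝ} {τ : WithTop ℝ} {k : ℝ}
    (hy : ContinuousOn y {t : ℝ | 0 ≤ t ∧ (t : WithTop ℝ) < τ}) (h0 : y 0 ≠ k)
    (hne : {t : ℝ | 0 < t ∧ (t : WithTop ℝ) < τ ∧ y t = k}.Nonempty) :
    sInf {t : ℝ | 0 < t ∧ (t : WithTop ℝ) < τ ∧ y t = k} ∈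
      {t : ℝ | 0 < t ∧ (t : WithTop ℝ) < τ ∧ y t = k} := by
  refine csInf_mem_of_isClosed_inter_Iic hne ⟨0, fun t ht => ht.1.le⟩ fun b hb => ?_
  have : {t : ℝ | 0 < t ∧ (t : WithTop ℝ) < τ ∧ y t = k} ∩ Iic b = Icc 0 b ∩ y ⁻¹' {k} := by
    ext t
    constructor
    · rintro ⟨⟨ht0, -, hyt⟩, htb⟩
      exact ⟨⟨ht0.le, htb⟩, hyt⟩
    · rintro ⟨ht, hyt⟩
      refine ⟨⟨ht.1.lt_of_ne ?_, Icc_subset_setOf_coe_lt hb.2.1 ht |>.2, hyt⟩, ht.2⟩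
      rintro rfl
      exact h0 hyt
  rw [this]
  exact (hy.mono (Icc_subset_setOf_coe_lt hb.2.1)).preimage_isClosed_of_isClosed isClosed_Icc
    isClosed_singleton

namespace FwdSol

variable {I : ℕ} {C₀ a σD α h₀ h₁ T : ℝ} {h f g H F G : ℝ → ℝ} {s : Set ℝ}

theorem mono {s' : Set ℝ} (hs : FwdSol I C₀ a σD α h₀ h f g s) (hs' : s' ⊆ s) :
    FwdSol I C₀ a σD α h₀ h f g s' :=
  ⟨hs.1, hs.2.1, hs.2.2.1, fun t ht =>
    let ⟨dh, df, dg⟩ := hs.2.2.2 t (hs' ht); ⟨dh.mono hs', df.mono hs', dg.mono hs'⟩⟩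

theorem continuousOn (hs : FwdSol I C₀ a σD α h₀ h f g s) :
    ContinuousOn h s ∧ ContinuousOn f s ∧ ContinuousOn g s :=
  ⟨fun t ht => (hs.2.2.2 t ht).1.continuousWithinAt,
    fun t ht => (hs.2.2.2 t ht).2.1.continuousWithinAt,
    fun t ht => (hs.2.2.2 t ht).2.2.continuousWithinAt⟩

theorem f_nonneg (hs : FwdSol I C₀ a σD α h₀ h f g (Icc 0 T)) : ∀ t ∈ Icc 0 T, 0 ≤ f t :=
  nonneg_of_hasDerivWithinAt_of_mul_le (fun t ht => (hs.2.2.2 t ht).2.1)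
    (c := fun t => a ^ 2 * σD ^ 2 / (2 * (I : ℝ)) * h t - C₀)
    ((continuousOn_const.mul hs.continuousOn.1).sub continuousOn_const)
    (fun t _ => by linarith) (by rw [hs.2.1]; exact zero_le_one)

theorem g_nonneg (ha : 0 ≤ a) (hs : FwdSol I C₀ a σD α h₀ h f g (Icc 0 T)) :
    ∀ t ∈ Icc 0 T, 0 ≤ g t :=
  nonneg_of_hasDerivWithinAt_of_mul_le (fun t ht => (hs.2.2.2 t ht).2.2)
    (c := fun t => a ^ 2 * σD ^ 2 / (2 * (I : ℝ)) * h t - C₀ - 2 / α * g t)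
    (((continuousOn_const.mul hs.continuousOn.1).sub continuousOn_const).sub
      (continuousOn_const.mul hs.continuousOn.2.2))
    (fun t ht => by nlinarith [mul_nonneg (mul_nonneg ha (sq_nonneg σD)) (hs.f_nonneg t ht)])
    hs.2.2.1.ge

theorem h_nonneg (hh₀ : 0 ≤ h₀) (hs : FwdSol I C₀ a σD α h₀ h f g (Icc 0 T)) :
    ∀ t ∈ Icc 0 T, 0 ≤ h t :=
  nonneg_of_hasDerivWithinAt_of_mul_le (fun t ht => (hs.2.2.2 t ht).1)
    (c := fun t => 2 * g t / α) ((continuousOn_const.mul hs.continuousOn.2.2).div_const α)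
    (fun _ _ => le_rfl) (hs.1 ▸ hh₀)

theorem sub_nonneg_of_le (ha : 0 ≤ a) (hα : 0 ≤ α) (hh₁ : 0 ≤ h₁) (hle : h₀ ≤ h₁)
    (s₀ : FwdSol I C₀ a σD α h₀ h f g (Icc 0 T)) (s₁ : FwdSol I C₀ a σD α h₁ H F G (Icc 0 T)) :
    ∀ t ∈ Icc 0 T, 0 ≤ F t - f t ∧ 0 ≤ G t - g t ∧ 0 ≤ H t - h t := by
  set κ := a ^ 2 * σD ^ 2 / (2 * (I : ℝ))
  obtain ⟨ch, cf, cg⟩ := s₀.continuousOn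
  obtain ⟨cH, cF, cG⟩ := s₁.continuousOn
  -- the differences `(F - f, G - g, H - h)` solve `x' = A x` with this matrix `A`
  let A : Fin 3 → Fin 3 → ℝ → ℝ :=
    ![![fun t => κ * H t - C₀, 0, fun t => κ * f t],
      ![fun _ => a * σD ^ 2, fun t => κ * H t - C₀ - 2 / α * (G t + g t), fun t => κ * g t],
      ![0, fun t => 2 / α * H t, fun t => 2 / α * g t]]
  let x : Fin 3 → ℝ → ℝ := ![F - f, G - g, H - h]
  suffices key : ∀ i, ∀ t ∈ Icc 0 T, 0 ≤ x i t from
    fun t ht => ⟨key 0 t ht, key 1 t ht, key 2 t ht⟩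
  refine nonneg_of_hasDerivWithinAt_of_metzler (A := A)
    (d := fun i t => ∑ j, A i j t * x j t) ?_ ?_ ?_ (fun _ _ _ => le_rfl) ?_
  · intro i t ht
    obtain ⟨dh, df, dg⟩ := s₀.2.2.2 t ht
    obtain ⟨dH, dF, dG⟩ := s₁.2.2.2 t ht
    fin_cases i
    · exact (dF.sub df).congr_deriv (by simp [x, A, Fin.sum_univ_three]; ring)
    · exact (dG.sub dg).congr_deriv (by simp [x, A, Fin.sum_univ_three]; ring)
    · exact (dH.sub dh).congr_deriv (by simp [x, A, Fin.sum_univ_three]; ring)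
  · intro i j
    fin_cases i <;> fin_cases j <;> simp [A] <;> fun_prop
  · intro i j hij t ht
    have hκ : 0 ≤ κ := by positivity
    fin_cases i <;> fin_cases j <;> simp [A] at hij ⊢
    · exact mul_nonneg hκ (s₀.f_nonneg t ht)
    · positivity
    · exact mul_nonneg hκ (s₀.g_nonneg ha t ht)
    · exact mul_nonneg (by positivity) (s₁.h_nonneg hh₁ t ht)
  · intro i
    fin_cases i <;> simp [x, s₀.1, s₀.2.1, s₀.2.2.1, s₁.1, s₁.2.1, s₁.2.2.1, hle]

theorem h_lt_of_lt (ha : 0 ≤ a) (hα : 0 ≤ α) (hh₁ : 0 ≤ h₁) (hlt : h₀ < h₁)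
    (s₀ : FwdSol I C₀ a σD α h₀ h f g (Icc 0 T)) (s₁ : FwdSol I C₀ a σD α h₁ H F G (Icc 0 T)) :
    ∀ t ∈ Icc 0 T, h t < H t := by
  have hdiff := sub_nonneg_of_le ha hα hh₁ hlt.le s₀ s₁
  -- `(H - h)' = (2/α) (H (G - g) + g (H - h)) ≥ 0`
  have hmono : MonotoneOn (H - h) (Icc 0 T) := by
    refine monotoneOn_of_hasDerivWithinAt_nonneg (convex_Icc 0 T)
      (f' := fun t => 2 * G t / α * H t - 2 * g t / α * h t)
      (s₁.continuousOn.1.sub s₀.continuousOn.1) (fun t ht => ?_) (fun t ht => ?_)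
    · rw [interior_Icc] at ht ⊢
      exact ((s₁.2.2.2 t (Ioo_subset_Icc_self ht)).1.sub
        (s₀.2.2.2 t (Ioo_subset_Icc_self ht)).1).mono Ioo_subset_Icc_self
    · rw [interior_Icc] at ht
      have ht' := Ioo_subset_Icc_self ht
      have : 0 ≤ 2 / α * (H t * (G t - g t) + g t * (H t - h t)) :=
        mul_nonneg (by positivity) (add_nonneg
          (mul_nonneg (s₁.h_nonneg hh₁ t ht') (hdiff t ht').2.1)
          (mul_nonneg (s₀.g_nonneg ha t ht') (hdiff t ht').2.2))
      exact this.trans_eq (by ring)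
  intro t ht
  have := hmono (left_mem_Icc.2 (ht.1.trans ht.2)) ht ht.1
  simp only [Pi.sub_apply, s₀.1, s₁.1] at this
  linarith

end FwdSol

theorem stmt9_general (I : ℕ) (C₀ a σD α k : ℝ)
    (ha : 0 < a) (hα : 0 < α)
    (τ : ℝ → WithTop ℝ) (H F G : ℝ → ℝ → ℝ) (Thit : ℝ → ℝ)
    (hsol : ∀ h₀ ∈ Ioo (0 : ℝ) k,
      FwdSol I C₀ a σD α h₀ (H h₀) (F h₀) (G h₀) {t : ℝ | 0 ≤ t ∧ (t : WithTop ℝ) < τ h₀})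
    (hhit : ∀ h₀ ∈ Ioo (0 : ℝ) k,
      {t : ℝ | 0 < t ∧ (t : WithTop ℝ) < τ h₀ ∧ H h₀ t = k}.Nonempty ∧
      Thit h₀ = sInf {t : ℝ | 0 < t ∧ (t : WithTop ℝ) < τ h₀ ∧ H h₀ t = k}) :
    StrictAntiOn Thit (Ioo 0 k) := by
  have hit : ∀ h ∈ Ioo (0 : ℝ) k, 0 < Thit h ∧ (Thit h : WithTop ℝ) < τ h ∧ H h (Thit h) = k :=
    fun h hh => (hhit h hh).2 ▸ csInf_hitting_mem (hsol h hh).continuousOn.1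
      ((hsol h hh).1.trans_ne hh.2.ne) (hhit h hh).1
  intro h₀ hh₀ h₁ hh₁ hlt
  obtain ⟨hT₀, hT₀τ, hHT₀⟩ := hit h₀ hh₀
  obtain ⟨-, hT₁τ, -⟩ := hit h₁ hh₁
  by_contra! hle
  have hT₀τ₁ : (Thit h₀ : WithTop ℝ) < τ h₁ := (WithTop.coe_le_coe.2 hle).trans_lt hT₁τ
  have hsol₀ := (hsol h₀ hh₀).mono (Icc_subset_setOf_coe_lt hT₀τ)
  have hsol₁ := (hsol h₁ hh₁).mono (Icc_subset_setOf_coe_lt hT₀τ₁)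
  have hk : k < H h₁ (Thit h₀) := hHT₀ ▸ FwdSol.h_lt_of_lt ha.le hα.le hh₁.1.le hlt hsol₀ hsol₁ _
    (right_mem_Icc.2 hT₀.le)
  obtain ⟨t, ht, hHt⟩ := intermediate_value_Ioo hT₀.le hsol₁.continuousOn.1
    ⟨hsol₁.1.symm ▸ hh₁.2, hk⟩
  have : Thit h₁ ≤ t := (hhit h₁ hh₁).2 ▸ csInf_le ⟨0, fun s hs => hs.1.le⟩
    ⟨ht.1, Icc_subset_setOf_coe_lt hT₀τ₁ (Ioo_subset_Icc_self ht) |>.2, hHt⟩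
  linarith [ht.2]

/-- the hitting-time map `h₀ ↦ T_{h=k}(h₀)` is strictly decreasing on `(0,k)`.
For each `h₀ ∈ (0,k)`, `(H h₀, F h₀, G h₀)` is the maximal solution of the forward ODE
system with maximal interval `[0, τ h₀)` (maximality expressed by `hmax`), and
`Thit h₀` is the (finite) hitting time of the level `k`. -/
theorem stmt9 (I : ℕ) (hI : 1 ≤ I) (C₀ T a σD α k : ℝ)
    (hT : 0 < T) (ha : 0 < a) (hσD : 0 < σD) (hα : 0 < α) (hk : 0 < k)
    (τ : ℝ → WithTop ℝ) (H F G : ℝ → ℝ → ℝ) (Thit : ℝ → ℝ)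
    (hτ : ∀ h₀ ∈ Ioo (0 : ℝ) k, 0 < τ h₀)
    (hsol : ∀ h₀ ∈ Ioo (0 : ℝ) k,
      FwdSol I C₀ a σD α h₀ (H h₀) (F h₀) (G h₀) {t : ℝ | 0 ≤ t ∧ (t : WithTop ℝ) < τ h₀})
    (hmax : ∀ h₀ ∈ Ioo (0 : ℝ) k, ∀ (T' : ℝ) (h' f' g' : ℝ → ℝ),
      FwdSol I C₀ a σD α h₀ h' f' g' (Ico 0 T') → (T' : WithTop ℝ) ≤ τ h₀)
    (hhit : ∀ h₀ ∈ Ioo (0 : ℝ) k,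
      {t : ℝ | 0 < t ∧ (t : WithTop ℝ) < τ h₀ ∧ H h₀ t = k}.Nonempty ∧
      Thit h₀ = sInf {t : ℝ | 0 < t ∧ (t : WithTop ℝ) < τ h₀ ∧ H h₀ t = k}) :
    StrictAntiOn Thit (Ioo 0 k) :=
  stmt9_general I C₀ a σD α k ha hα τ H F G Thit hsol hhit
end

section
/- Suppose h₀ ≥ 0 and that the maximal solution (h, f, g) of the forward ODE system satisfies 0 ≤ h(t) < k for all t in its maximal existence interval [0, τ(h₀)). Then for all t ∈ [0, τ(h₀)): f(t) ≤ (1 + t)·e^{C₃ t} and g(t) ≤ a σ_D² e^{C₃ t}·(t + t²/2). -/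
/-!
Both bounds are comparison (Grönwall) arguments. On `[0, τ)` the rate `(a²σ_D²/(2I))·h − C₀` is
at most `C₃`, so wherever `f ≥ 0` we get `f' ≤ 1 + C₃ f`, whose solution from `f 0 = 1` is dominated
by `(1 + t) e^{C₃ t}`. Dropping the term `−(2/α) g² ≤ 0` and inserting the bound on `f`, wherever
`g ≥ 0` we get `g' ≤ aσ_D² (1 + t) e^{C₃ t} + C₃ g`, and `aσ_D² e^{C₃ t} (t + t²/2)` solves this
with equality from `g 0 = 0`.
-/

open Set

open Real

theorem image_le_of_deriv_right_le_deriv_add_mul_boundary {f f' B B' : ℝ → ℝ} {a b : ℝ} (K : ℝ)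
    (hf : ContinuousOn f (Icc a b)) (hf' : ∀ x ∈ Ico a b, HasDerivWithinAt f (f' x) (Ici x) x)
    (ha : f a ≤ B a) (hB : ∀ x, HasDerivAt B (B' x) x)
    (bound : ∀ x ∈ Ico a b, B x < f x → f' x ≤ B' x + K * (f x - B x)) :
    ∀ ⦃x⦄, x ∈ Icc a b → f x ≤ B x := by
  intro x hx
  refine le_of_forall_pos_le_add fun ε hε => ?_
  -- The perturbation `ε e^{(K+1)(y-x)}` equals `ε` at `x` and grows strictly faster than `K`-linearly.
  set e : ℝ → ℝ := fun y => ε * exp ((K + 1) * (y - x)) with he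
  have he_pos : ∀ y, 0 < e y := fun y => by positivity
  have hBe : ∀ y, HasDerivAt (fun y => B y + e y) (B' y + (K + 1) * e y) y := fun y =>
    (hB y).add <| ((((hasDerivAt_id y).sub_const x).const_mul (K + 1)).exp.const_mul ε).congr_deriv
      (by simp only [he, id_eq]; ring)
  have hstrict : ∀ y ∈ Ico a b, f y = B y + e y → f' y < B' y + (K + 1) * e y := by
    intro y hy hfy
    have hle := bound y hy (by linarith [he_pos y])
    rw [hfy, add_sub_cancel_left] at hle
    linarith [he_pos y]
  have := image_le_of_deriv_right_lt_deriv_boundary hf hf' (by linarith [he_pos a]) hBe hstrict hx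
  simpa [he] using this

theorem image_le_of_hasDerivWithinAt_Ico_of_deriv_le_deriv_add_mul {f f' B B' : ℝ → ℝ} {a b : ℝ}
    (K : ℝ) (hf : ∀ x ∈ Ico a b, HasDerivWithinAt f (f' x) (Ico a b) x) (ha : f a ≤ B a)
    (hB : ∀ x, HasDerivAt B (B' x) x)
    (bound : ∀ x ∈ Ico a b, B x < f x → f' x ≤ B' x + K * (f x - B x)) :
    ∀ x ∈ Ico a b, f x ≤ B x := by
  intro t ht
  have hsub : Icc a t ⊆ Ico a b := Icc_subset_Ico_right ht.2
  refine image_le_of_deriv_right_le_deriv_add_mul_boundary K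
    (fun x hx => (hf x (hsub hx)).continuousWithinAt.mono hsub) (fun x hx => ?_) ha hB
    (fun x hx => bound x (hsub (Ico_subset_Icc_self hx))) ⟨ht.1, le_rfl⟩
  have hx' : x ∈ Ico a b := hsub (Ico_subset_Icc_self hx)
  exact (hf x hx').mono_of_mem_nhdsWithin
    (Filter.mem_of_superset (Ico_mem_nhdsGE hx'.2) (Ico_subset_Ico_left hx'.1))

theorem hasDerivAt_one_add_mul_exp_mul (C x : ℝ) :
    HasDerivAt (fun t => (1 + t) * exp (C * t))
      (exp (C * x) + C * ((1 + x) * exp (C * x))) x := by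
  have := ((hasDerivAt_id x).const_add 1).mul ((hasDerivAt_id x).const_mul C).exp
  exact this.congr_deriv (by simp only [id_eq]; ring)

theorem hasDerivAt_const_mul_exp_mul_mul_add_sq_div_two (A C x : ℝ) :
    HasDerivAt (fun t => A * exp (C * t) * (t + t ^ 2 / 2))
      (A * ((1 + x) * exp (C * x)) + C * (A * exp (C * x) * (x + x ^ 2 / 2))) x := by
  have hpoly : HasDerivAt (fun t : ℝ => t + t ^ 2 / 2) (1 + x) x :=
    ((hasDerivAt_id' x).add ((hasDerivAt_pow 2 x).div_const 2)).congr_deriv (by ring)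
  exact ((((hasDerivAt_id x).const_mul C).exp.const_mul A).mul hpoly).congr_deriv
    (by simp only [id_eq]; ring)

theorem stmt12_general (I : ℕ) (C₀ a σD α k : ℝ)
    (ha : 0 < a) (hα : 0 < α)
    (h₀ τ : ℝ) (h f g : ℝ → ℝ)
    (hsol : FwdSol I C₀ a σD α h₀ h f g (Ico 0 τ))
    (hbound : ∀ t ∈ Ico (0 : ℝ) τ, 0 ≤ h t ∧ h t < k)
    (C₃ : ℝ) (hC₃ : C₃ = a ^ 2 * σD ^ 2 / (2 * (I : ℝ)) * k + |C₀|) :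
    ∀ t ∈ Ico (0 : ℝ) τ,
      f t ≤ (1 + t) * Real.exp (C₃ * t) ∧
      g t ≤ a * σD ^ 2 * Real.exp (C₃ * t) * (t + t ^ 2 / 2) := by
  obtain ⟨-, hf0, hg0, hderiv⟩ := hsol
  have hrate : ∀ x ∈ Ico (0 : ℝ) τ,
      a ^ 2 * σD ^ 2 / (2 * (I : ℝ)) * h x - C₀ ≤ C₃ ∧ 0 ≤ C₃ := by
    intro x hx
    have hc : 0 ≤ a ^ 2 * σD ^ 2 / (2 * (I : ℝ)) := by positivity
    obtain ⟨hh0, hhk⟩ := hbound x hx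
    have hck := mul_le_mul_of_nonneg_left hhk.le hc
    constructor <;> linarith [mul_nonneg hc hh0, neg_le_abs C₀, abs_nonneg C₀]
  have hf : ∀ t ∈ Ico (0 : ℝ) τ, f t ≤ (1 + t) * exp (C₃ * t) := by
    refine image_le_of_hasDerivWithinAt_Ico_of_deriv_le_deriv_add_mul C₃
      (fun x hx => (hderiv x hx).2.1) (by simp [hf0]) (hasDerivAt_one_add_mul_exp_mul C₃) ?_
    intro x hx hlt
    obtain ⟨hq, hC₃0⟩ := hrate x hx
    have hf_nonneg : 0 ≤ f x := hlt.le.trans' (by have := hx.1; positivity)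
    have hexp : 1 ≤ exp (C₃ * x) := one_le_exp (mul_nonneg hC₃0 hx.1)
    linarith [mul_le_mul_of_nonneg_left hq hf_nonneg]
  refine fun t ht => ⟨hf t ht, ?_⟩
  refine image_le_of_hasDerivWithinAt_Ico_of_deriv_le_deriv_add_mul C₃
    (fun x hx => (hderiv x hx).2.2) (by simp [hg0])
    (hasDerivAt_const_mul_exp_mul_mul_add_sq_div_two (a * σD ^ 2) C₃) ?_ t ht
  intro x hx hlt
  obtain ⟨hq, hC₃0⟩ := hrate x hx
  have hg_nonneg : 0 ≤ g x := hlt.le.trans' (by have := hx.1; positivity)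
  have hsq : 0 ≤ 2 / α * g x ^ 2 := by positivity
  linarith [mul_le_mul_of_nonneg_left hq hg_nonneg,
    mul_le_mul_of_nonneg_left (hf x hx) (by positivity : 0 ≤ a * σD ^ 2)]

/-- if `h₀ ≥ 0` and `0 ≤ h < k` on the (maximal) interval of existence `[0,τ)`,
then `f t ≤ (1+t)·e^{C₃t}` and `g t ≤ a σ_D² e^{C₃t}(t + t²/2)` there, where
`C₃ = (a²σ_D²/(2I))·k + |C₀|`. -/
theorem stmt12 (I : ℕ) (hI : 1 ≤ I) (C₀ T a σD α k : ℝ)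
    (hT : 0 < T) (ha : 0 < a) (hσD : 0 < σD) (hα : 0 < α) (hk : 0 < k)
    (h₀ τ : ℝ) (hh₀ : 0 ≤ h₀) (hτ : 0 < τ) (h f g : ℝ → ℝ)
    (hsol : FwdSol I C₀ a σD α h₀ h f g (Ico 0 τ))
    (hbound : ∀ t ∈ Ico (0 : ℝ) τ, 0 ≤ h t ∧ h t < k)
    (C₃ : ℝ) (hC₃ : C₃ = a ^ 2 * σD ^ 2 / (2 * (I : ℝ)) * k + |C₀|) :
    ∀ t ∈ Ico (0 : ℝ) τ,
      f t ≤ (1 + t) * Real.exp (C₃ * t) ∧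
      g t ≤ a * σD ^ 2 * Real.exp (C₃ * t) * (t + t ^ 2 / 2) :=
  stmt12_general I C₀ a σD α k ha hα h₀ τ h f g hsol hbound C₃ hC₃
end

section
/- Set C₀ := δ − (a/(2I))·(a I σ_Y² + 2 a L ρ σ_D σ_Y − 2 I μ_Y − 2 L μ_D) − a² σ_D² L²/(2I²). Suppose (h, f, g) is a solution of the forward ODE system on [0, T] (for some initial value h₀ ∈ ℝ, with h(0) = h₀, f(0) = 1, g(0) = 0) such that f(t) > 0 for all t ∈ [0, T]. Then the time-reversed functions ψ(t) := h(T − t) + L²/I, F(t) := f(T − t), and Q₂₂(t) := −g(T − t)/f(T − t) satisfy on [0, T] the equations ψ'(t) = (2 F(t) Q₂₂(t)/α)·(ψ(t) − L²/I), F'(t) = F(t)·(δ − (a² σ_D²/(2I))·ψ(t) − (a/(2I))·(a I σ_Y² + 2 a L ρ σ_D σ_Y − 2 I μ_Y − 2 L μ_D)) − 1, and Q₂₂'(t) = a σ_D² − 2 F(t) Q₂₂(t)²/α + Q₂₂(t)/F(t), with terminal values ψ(T) = h₀ + L²/I, F(T) = 1, and Q₂₂(T) = 0. -/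
open Set

/-! Reversing time turns each forward derivative into its negative, and the quotient
`Q = -g/f` satisfies a Riccati equation because `f` and `g` share the linear coefficient
`(a²σ_D²/(2I))·h − C₀`: it cancels in `g'f − gf'`. The shift `ψ = h + L²/I` absorbs the last
summand of `C₀`. -/

theorem HasDerivWithinAt.comp_const_sub {𝕜 F : Type*} [NontriviallyNormedField 𝕜]
    [NormedAddCommGroup F] [NormedSpace 𝕜 F] {u : 𝕜 → F} {u' : F} {s t : Set 𝕜} {a x : 𝕜}
    (hu : HasDerivWithinAt u u' t (a - x)) (hst : MapsTo (a - ·) s t) :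
    HasDerivWithinAt (fun y ↦ u (a - y)) (-u') s x := by
  simpa [Function.comp_def] using hu.scomp x ((hasDerivWithinAt_id x s).const_sub a) hst

theorem Set.mapsTo_const_sub_Icc {α : Type*} [AddCommGroup α] [PartialOrder α]
    [IsOrderedAddMonoid α] (a : α) : MapsTo (a - ·) (Icc 0 a) (Icc 0 a) :=
  mapsTo_iff_subset_preimage.2 (by rw [preimage_const_sub_Icc, sub_zero, sub_self])

theorem HasDerivWithinAt.neg_div_of_riccati {f g : ℝ → ℝ} {s : Set ℝ} {t c k X : ℝ}
    (hf : HasDerivWithinAt f (1 + f t * X) s t)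
    (hg : HasDerivWithinAt g (c * f t - k * g t ^ 2 + g t * X) s t) (hft : f t ≠ 0) :
    HasDerivWithinAt (fun x ↦ -g x / f x)
      (-(c - k * f t * (-g t / f t) ^ 2 + -g t / f t / f t)) s t := by
  refine (hg.neg.div hf hft).congr_deriv ?_
  rw [Pi.neg_apply]
  field_simp
  ring

theorem stmt14_general (I : ℕ) (L μD μY ρ δ σY T a σD α : ℝ)
    (C₀ : ℝ)
    (hC₀ : C₀ = δ -
        a * (a * (I : ℝ) * σY ^ 2 + 2 * a * L * ρ * σD * σY - 2 * (I : ℝ) * μY - 2 * L * μD) /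
          (2 * (I : ℝ)) -
        a ^ 2 * σD ^ 2 * L ^ 2 / (2 * (I : ℝ) ^ 2))
    (h₀ : ℝ) (h f g : ℝ → ℝ)
    (hsol : FwdSol I C₀ a σD α h₀ h f g (Icc 0 T))
    (hf : ∀ t ∈ Icc (0 : ℝ) T, 0 < f t)
    (ψ F Q22 : ℝ → ℝ)
    (hψ : ∀ t, ψ t = h (T - t) + L ^ 2 / (I : ℝ))
    (hF : ∀ t, F t = f (T - t))
    (hQ22 : ∀ t, Q22 t = -g (T - t) / f (T - t)) :
    (∀ t ∈ Icc (0 : ℝ) T,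
      HasDerivWithinAt ψ (2 * F t * Q22 t / α * (ψ t - L ^ 2 / (I : ℝ))) (Icc 0 T) t ∧
      HasDerivWithinAt F
        (F t * (δ - a ^ 2 * σD ^ 2 / (2 * (I : ℝ)) * ψ t -
          a * (a * (I : ℝ) * σY ^ 2 + 2 * a * L * ρ * σD * σY - 2 * (I : ℝ) * μY - 2 * L * μD) /
            (2 * (I : ℝ))) - 1) (Icc 0 T) t ∧
      HasDerivWithinAt Q22 (a * σD ^ 2 - 2 * F t * Q22 t ^ 2 / α + Q22 t / F t) (Icc 0 T) t) ∧
    ψ T = h₀ + L ^ 2 / (I : ℝ) ∧ F T = 1 ∧ Q22 T = 0 := by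
  obtain ⟨hh0, hf0, hg0, hderiv⟩ := hsol
  obtain rfl : ψ = _ := funext hψ
  obtain rfl : F = _ := funext hF
  obtain rfl : Q22 = _ := funext hQ22
  refine ⟨fun t ht ↦ ?_, by simp [hh0], by simp [hf0], by simp [hg0]⟩
  have hreflect := mapsTo_const_sub_Icc T
  obtain ⟨hh', hf', hg'⟩ := hderiv (T - t) (hreflect ht)
  have hft : f (T - t) ≠ 0 := (hf (T - t) (hreflect ht)).ne'
  refine ⟨?_, ?_, ?_⟩
  · refine ((hh'.comp_const_sub hreflect).add_const (L ^ 2 / (I : ℝ))).congr_deriv ?_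
    field_simp
    ring
  · refine (hf'.comp_const_sub hreflect).congr_deriv ?_
    rw [hC₀]
    ring
  · refine ((hf'.neg_div_of_riccati hg' hft).comp_const_sub hreflect).congr_deriv ?_
    ring

/-- time reversal.  With `C₀` chosen as in the proof of Lemma 1, if `(h,f,g)`
solves the forward ODE system on `[0,T]` with `f > 0`, then `ψ(t) = h(T−t) + L²/I`,
`F(t) = f(T−t)` and `Q₂₂(t) = −g(T−t)/f(T−t)` solve the corresponding backward equations
with terminal values `ψ(T) = h₀ + L²/I`, `F(T) = 1`, `Q₂₂(T) = 0`. -/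
theorem stmt14 (I : ℕ) (hI : 1 ≤ I) (L μD μY ρ δ σY T a σD α : ℝ)
    (hρ : ρ ∈ Icc (-1 : ℝ) 1) (hδ : 0 ≤ δ) (hσY : 0 ≤ σY)
    (hT : 0 < T) (ha : 0 < a) (hσD : 0 < σD) (hα : 0 < α)
    (C₀ : ℝ)
    (hC₀ : C₀ = δ -
        a * (a * (I : ℝ) * σY ^ 2 + 2 * a * L * ρ * σD * σY - 2 * (I : ℝ) * μY - 2 * L * μD) /
          (2 * (I : ℝ)) -
        a ^ 2 * σD ^ 2 * L ^ 2 / (2 * (I : ℝ) ^ 2))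
    (h₀ : ℝ) (h f g : ℝ → ℝ)
    (hsol : FwdSol I C₀ a σD α h₀ h f g (Icc 0 T))
    (hf : ∀ t ∈ Icc (0 : ℝ) T, 0 < f t)
    (ψ F Q22 : ℝ → ℝ)
    (hψ : ∀ t, ψ t = h (T - t) + L ^ 2 / (I : ℝ))
    (hF : ∀ t, F t = f (T - t))
    (hQ22 : ∀ t, Q22 t = -g (T - t) / f (T - t)) :
    (∀ t ∈ Icc (0 : ℝ) T,
      HasDerivWithinAt ψ (2 * F t * Q22 t / α * (ψ t - L ^ 2 / (I : ℝ))) (Icc 0 T) t ∧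
      HasDerivWithinAt F
        (F t * (δ - a ^ 2 * σD ^ 2 / (2 * (I : ℝ)) * ψ t -
          a * (a * (I : ℝ) * σY ^ 2 + 2 * a * L * ρ * σD * σY - 2 * (I : ℝ) * μY - 2 * L * μD) /
            (2 * (I : ℝ))) - 1) (Icc 0 T) t ∧
      HasDerivWithinAt Q22 (a * σD ^ 2 - 2 * F t * Q22 t ^ 2 / α + Q22 t / F t) (Icc 0 T) t) ∧
    ψ T = h₀ + L ^ 2 / (I : ℝ) ∧ F T = 1 ∧ Q22 T = 0 :=
  stmt14_general I L μD μY ρ δ σY T a σD α C₀ hC₀ h₀ h f g hsol hf ψ F Q22 hψ hF hQ22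
end

section
/- Let θ_{1,0}, …, θ_{I,0} ∈ ℝ satisfy Σ_{i=1}^I θ_{i,0} = L. Then Σ_{i=1}^I θ_{i,0}² ≥ L²/I, with equality if and only if θ_{i,0} = L/I for all i. Moreover, if ψ : [0, T] → ℝ is differentiable with ψ(0) = Σ_{i=1}^I θ_{i,0}² and ψ'(t) = c(t)·(ψ(t) − L²/I) for some continuous function c, then ψ(t) ≥ L²/I for all t ∈ [0, T], and the Nash equilibrium interest rate satisfies r(t) ≤ r^Radner for all t ∈ [0, T]; both inequalities are strict (for all t) whenever θ_{i,0} ≠ L/I for some i. -/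
open Set Finset

/-! The identity `∑ (θᵢ - L/I)² = ∑ θᵢ² - L²/I` gives the bound and its equality case.
The linear equation for `ψ` is solved with an integrating factor,
`ψ t - L²/I = (ψ 0 - L²/I) · exp (∫₀ᵗ c)`, so `ψ - L²/I` keeps the sign it has at `0`;
and `r(t) - r^Radner = -(a²σ_D²/(2I)) (ψ t - L²/I)`. -/

section Mean

variable {ι : Type*} [Fintype ι]

theorem sum_sub_mean_sq (θ : ι → ℝ) :
    ∑ i, (θ i - (∑ j, θ j) / Fintype.card ι) ^ 2 =
      ∑ i, θ i ^ 2 - (∑ i, θ i) ^ 2 / Fintype.card ι := by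
  rcases isEmpty_or_nonempty ι with _ | _
  · simp
  have hn : (Fintype.card ι : ℝ) ≠ 0 := by positivity
  simp_rw [sub_sq, sum_add_distrib, sum_sub_distrib, ← sum_mul, ← mul_sum, sum_const, card_univ,
    nsmul_eq_mul]
  field_simp
  ring

theorem sq_sum_div_card_le_sum_sq (θ : ι → ℝ) :
    (∑ i, θ i) ^ 2 / Fintype.card ι ≤ ∑ i, θ i ^ 2 := by
  have hdev : 0 ≤ ∑ i, (θ i - (∑ j, θ j) / Fintype.card ι) ^ 2 := by positivity
  linarith [sum_sub_mean_sq θ]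

theorem sum_sq_eq_sq_sum_div_card_iff (θ : ι → ℝ) :
    ∑ i, θ i ^ 2 = (∑ i, θ i) ^ 2 / Fintype.card ι ↔ ∀ i, θ i = (∑ j, θ j) / Fintype.card ι := by
  rw [← sub_eq_zero, ← sum_sub_mean_sq,
    Finset.sum_eq_zero_iff_of_nonneg fun i _ => sq_nonneg _]
  simp [sub_eq_zero]

end Mean

theorem ContinuousOn.exists_hasDerivWithinAt_Icc {a b : ℝ} {c : ℝ → ℝ}
    (hc : ContinuousOn c (Icc a b)) :
    ∃ F : ℝ → ℝ, ∀ t ∈ Icc a b, HasDerivWithinAt F (c t) (Icc a b) t := by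
  rcases lt_or_ge b a with hba | hab
  · exact ⟨0, fun t ht => absurd (ht.1.trans ht.2) hba.not_ge⟩
  have hc' : Continuous (IccExtend hab (Set.domRestrict (Icc a b) c)) :=
    continuous_IccExtend_iff.2 hc.domRestrict
  refine ⟨fun u => ∫ x in a..u, IccExtend hab (Set.domRestrict (Icc a b) c) x, fun t ht => ?_⟩
  have := (hc'.integral_hasStrictDerivAt a t).hasDerivAt.hasDerivWithinAt (s := Icc a b)
  rwa [IccExtend_of_mem _ _ ht, Set.domRestrict_apply] at this

theorem sub_eq_mul_exp_of_hasDerivWithinAt {a b K : ℝ} {ψ c F : ℝ → ℝ}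
    (hF : ∀ t ∈ Icc a b, HasDerivWithinAt F (c t) (Icc a b) t)
    (hψ : ∀ t ∈ Icc a b, HasDerivWithinAt ψ (c t * (ψ t - K)) (Icc a b) t) :
    ∀ t ∈ Icc a b, ψ t - K = (ψ a - K) * Real.exp (F t - F a) := by
  set g : ℝ → ℝ := fun t => (ψ t - K) * Real.exp (-F t)
  have hg : ∀ t ∈ Icc a b, HasDerivWithinAt g 0 (Icc a b) t := fun t ht => by
    refine (((hψ t ht).sub_const K).fun_mul (hF t ht).fun_neg.exp).congr_deriv ?_
    ring
  have hconst : ∀ t ∈ Icc a b, g t = g a :=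
    constant_of_has_deriv_right_zero (fun t ht => (hg t ht).continuousWithinAt) fun t ht =>
      (hg t (Ico_subset_Icc_self ht)).mono_of_mem_nhdsWithin (Icc_mem_nhdsGE_of_mem ht)
  intro t ht
  have hgt := hconst t ht
  simp only [g, Real.exp_neg] at hgt
  rw [Real.exp_sub]
  field_simp at hgt ⊢
  linarith

theorem stmt16_general (I : ℕ) (L μD μY ρ δ σY T a σD : ℝ) (ha : 0 < a) (hσD : 0 < σD)
    (θ0 : Fin I → ℝ) (hsum : ∑ i, θ0 i = L) :
    L ^ 2 / (I : ℝ) ≤ ∑ i, θ0 i ^ 2 ∧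
    ((∑ i, θ0 i ^ 2) = L ^ 2 / (I : ℝ) ↔ ∀ i, θ0 i = L / (I : ℝ)) ∧
    (∀ ψ c : ℝ → ℝ, ContinuousOn c (Icc 0 T) →
      ψ 0 = ∑ i, θ0 i ^ 2 →
      (∀ t ∈ Icc (0 : ℝ) T,
        HasDerivWithinAt ψ (c t * (ψ t - L ^ 2 / (I : ℝ))) (Icc 0 T) t) →
      (∀ t ∈ Icc (0 : ℝ) T, L ^ 2 / (I : ℝ) ≤ ψ t ∧
        δ - a ^ 2 * σD ^ 2 / (2 * (I : ℝ)) * ψ t -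
            a * (a * (I : ℝ) * σY ^ 2 + 2 * a * L * ρ * σD * σY - 2 * (I : ℝ) * μY -
              2 * L * μD) / (2 * (I : ℝ)) ≤
          δ - a ^ 2 * σD ^ 2 * L ^ 2 / (2 * (I : ℝ) ^ 2) -
            a * (a * (I : ℝ) * σY ^ 2 + 2 * a * L * ρ * σD * σY - 2 * (I : ℝ) * μY -
              2 * L * μD) / (2 * (I : ℝ))) ∧
      ((∃ i, θ0 i ≠ L / (I : ℝ)) → ∀ t ∈ Icc (0 : ℝ) T, L ^ 2 / (I : ℝ) < ψ t ∧
        δ - a ^ 2 * σD ^ 2 / (2 * (I : ℝ)) * ψ t -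
            a * (a * (I : ℝ) * σY ^ 2 + 2 * a * L * ρ * σD * σY - 2 * (I : ℝ) * μY -
              2 * L * μD) / (2 * (I : ℝ)) <
          δ - a ^ 2 * σD ^ 2 * L ^ 2 / (2 * (I : ℝ) ^ 2) -
            a * (a * (I : ℝ) * σY ^ 2 + 2 * a * L * ρ * σD * σY - 2 * (I : ℝ) * μY -
              2 * L * μD) / (2 * (I : ℝ)))) := by
  have hle := sq_sum_div_card_le_sum_sq θ0
  have hiff := sum_sq_eq_sq_sum_div_card_iff θ0
  rw [hsum, Fintype.card_fin] at hle hiff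
  refine ⟨hle, hiff, fun ψ c hc hψ0 hψ => ?_⟩
  obtain ⟨F, hF⟩ := hc.exists_hasDerivWithinAt_Icc
  have hsol := sub_eq_mul_exp_of_hasDerivWithinAt hF hψ
  have hradner : a ^ 2 * σD ^ 2 * L ^ 2 / (2 * (I : ℝ) ^ 2) =
      a ^ 2 * σD ^ 2 / (2 * (I : ℝ)) * (L ^ 2 / I) := by
    rw [div_mul_div_comm]; ring
  rw [hradner]
  refine ⟨fun t ht => ?_, fun ⟨i, hi⟩ t ht => ?_⟩
  · have hψt : L ^ 2 / I ≤ ψ t := sub_nonneg.1 <| hsol t ht ▸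
      mul_nonneg (sub_nonneg.2 (hψ0 ▸ hle)) (Real.exp_pos _).le
    exact ⟨hψt, by gcongr⟩
  · have hψ0' : L ^ 2 / I < ψ 0 := hψ0 ▸ lt_of_le_of_ne hle fun h => hi (hiff.1 h.symm i)
    have hψt : L ^ 2 / I < ψ t := sub_pos.1 <| hsol t ht ▸
      mul_pos (sub_pos.2 hψ0') (Real.exp_pos _)
    have hI : (0 : ℝ) < I := Nat.cast_pos.2 i.pos
    exact ⟨hψt, by gcongr⟩

/-- Cauchy–Schwarz for the initial endowments and the interest-rate ordering.
If `∑ᵢ θᵢ₀ = L` then `∑ᵢ θᵢ₀² ≥ L²/I` with equality iff all `θᵢ₀ = L/I`; moreover, if `ψ`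
solves `ψ' = c(t)(ψ − L²/I)` with `ψ(0) = ∑ᵢ θᵢ₀²` for a continuous `c`, then `ψ ≥ L²/I`
on `[0,T]` and the Nash rate `r(t)` is `≤ r^Radner`, with strict inequalities whenever
some `θᵢ₀ ≠ L/I`. -/
theorem stmt16 (I : ℕ) (hI : 1 ≤ I) (L μD μY ρ δ σY T a σD : ℝ)
    (hρ : ρ ∈ Icc (-1 : ℝ) 1) (hδ : 0 ≤ δ) (hσY : 0 ≤ σY)
    (hT : 0 < T) (ha : 0 < a) (hσD : 0 < σD)
    (θ0 : Fin I → ℝ) (hsum : ∑ i, θ0 i = L) :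
    L ^ 2 / (I : ℝ) ≤ ∑ i, θ0 i ^ 2 ∧
    ((∑ i, θ0 i ^ 2) = L ^ 2 / (I : ℝ) ↔ ∀ i, θ0 i = L / (I : ℝ)) ∧
    (∀ ψ c : ℝ → ℝ, ContinuousOn c (Icc 0 T) →
      ψ 0 = ∑ i, θ0 i ^ 2 →
      (∀ t ∈ Icc (0 : ℝ) T,
        HasDerivWithinAt ψ (c t * (ψ t - L ^ 2 / (I : ℝ))) (Icc 0 T) t) →
      (∀ t ∈ Icc (0 : ℝ) T, L ^ 2 / (I : ℝ) ≤ ψ t ∧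
        δ - a ^ 2 * σD ^ 2 / (2 * (I : ℝ)) * ψ t -
            a * (a * (I : ℝ) * σY ^ 2 + 2 * a * L * ρ * σD * σY - 2 * (I : ℝ) * μY -
              2 * L * μD) / (2 * (I : ℝ)) ≤
          δ - a ^ 2 * σD ^ 2 * L ^ 2 / (2 * (I : ℝ) ^ 2) -
            a * (a * (I : ℝ) * σY ^ 2 + 2 * a * L * ρ * σD * σY - 2 * (I : ℝ) * μY -
              2 * L * μD) / (2 * (I : ℝ))) ∧
      ((∃ i, θ0 i ≠ L / (I : ℝ)) → ∀ t ∈ Icc (0 : ℝ) T, L ^ 2 / (I : ℝ) < ψ t ∧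
        δ - a ^ 2 * σD ^ 2 / (2 * (I : ℝ)) * ψ t -
            a * (a * (I : ℝ) * σY ^ 2 + 2 * a * L * ρ * σD * σY - 2 * (I : ℝ) * μY -
              2 * L * μD) / (2 * (I : ℝ)) <
          δ - a ^ 2 * σD ^ 2 * L ^ 2 / (2 * (I : ℝ) ^ 2) -
            a * (a * (I : ℝ) * σY ^ 2 + 2 * a * L * ρ * σD * σY - 2 * (I : ℝ) * μY -
              2 * L * μD) / (2 * (I : ℝ)))) :=
  stmt16_general I L μD μY ρ δ σY T a σD ha hσD θ0 hsum
end

section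
/- The competitive Radner and Pareto-efficient equilibrium interest rates satisfy r^Pareto − r^Radner = a² σ_Y² (1 − ρ²)(I − 1)/(2I) ≥ 0; in particular r^Radner ≤ r^Pareto, with equality if and only if ρ² = 1, σ_Y = 0, or I = 1. -/
/-!
The two rates share the drift terms and differ only in the risk-premium quadratic form:
expanding `(L σ_D + I σ_Y ρ)²`, the Pareto form is the Radner form with `I² σ_Y²` replaced by
`I σ_Y² (ρ² (I - 1) + 1)`, so the gap is `a² σ_Y² (1 - ρ²)(I - 1)/(2I)`, a product of
nonnegative factors that vanishes exactly when one of them does.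
-/

open Set

noncomputable section

/-- `n` is the number of agents `I`, taken as a real number. -/
def radnerRate (n L μD μY δ σY a σD ρ : ℝ) : ℝ :=
  δ + a / n * (L * μD + n * μY) -
    a ^ 2 / (2 * n ^ 2) * (n ^ 2 * σY ^ 2 + 2 * n * L * ρ * σD * σY + L ^ 2 * σD ^ 2)

def paretoRate (n L μD μY δ σY a σD ρ : ℝ) : ℝ :=
  δ + a / n * (L * μD + n * μY) -
    a ^ 2 / (2 * n ^ 2) * ((L * σD + n * σY * ρ) ^ 2 + n * σY ^ 2 * (1 - ρ ^ 2))

end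

theorem paretoRate_sub_radnerRate {n : ℝ} (hn : n ≠ 0) (L μD μY δ σY a σD ρ : ℝ) :
    paretoRate n L μD μY δ σY a σD ρ - radnerRate n L μD μY δ σY a σD ρ =
      a ^ 2 * σY ^ 2 * (1 - ρ ^ 2) * (n - 1) / (2 * n) := by
  unfold paretoRate radnerRate
  field_simp
  ring

theorem rate_gap_nonneg {n ρ : ℝ} (hn : 1 ≤ n) (hρ : ρ ^ 2 ≤ 1) (a σ : ℝ) :
    0 ≤ a ^ 2 * σ ^ 2 * (1 - ρ ^ 2) * (n - 1) / (2 * n) := by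
  have hρ' : 0 ≤ 1 - ρ ^ 2 := sub_nonneg.mpr hρ
  have hn' : 0 ≤ n - 1 := sub_nonneg.mpr hn
  have hn'' : 0 ≤ n := by linarith
  positivity

theorem rate_gap_eq_zero_iff {a n : ℝ} (ha : a ≠ 0) (hn : n ≠ 0) (σ ρ : ℝ) :
    a ^ 2 * σ ^ 2 * (1 - ρ ^ 2) * (n - 1) / (2 * n) = 0 ↔ ρ ^ 2 = 1 ∨ σ = 0 ∨ n = 1 := by
  simp only [div_eq_zero_iff, mul_eq_zero, pow_eq_zero_iff two_ne_zero, sub_eq_zero,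
    ha, hn, two_ne_zero, false_or, or_false]
  tauto

theorem stmt17_general (I : ℕ) (hI : 1 ≤ I) (L μD μY ρ δ σY a σD : ℝ)
    (hρ : ρ ∈ Icc (-1 : ℝ) 1) (ha : 0 < a)
    (rRadner rPareto : ℝ)
    (hR : rRadner = δ + a / (I : ℝ) * (L * μD + (I : ℝ) * μY) -
      a ^ 2 / (2 * (I : ℝ) ^ 2) *
        ((I : ℝ) ^ 2 * σY ^ 2 + 2 * (I : ℝ) * L * ρ * σD * σY + L ^ 2 * σD ^ 2))
    (hP : rPareto = δ + a / (I : ℝ) * (L * μD + (I : ℝ) * μY) -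
      a ^ 2 / (2 * (I : ℝ) ^ 2) *
        ((L * σD + (I : ℝ) * σY * ρ) ^ 2 + (I : ℝ) * σY ^ 2 * (1 - ρ ^ 2))) :
    rPareto - rRadner = a ^ 2 * σY ^ 2 * (1 - ρ ^ 2) * ((I : ℝ) - 1) / (2 * (I : ℝ)) ∧
    rRadner ≤ rPareto ∧
    (rRadner = rPareto ↔ ρ ^ 2 = 1 ∨ σY = 0 ∨ I = 1) := by
  have hI' : (1 : ℝ) ≤ I := by exact_mod_cast hI
  have hI0 : (I : ℝ) ≠ 0 := by positivity
  have hρ2 : ρ ^ 2 ≤ 1 := sq_le_one_iff_abs_le_one ρ |>.mpr (abs_le.mpr hρ)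
  have gap : rPareto - rRadner = a ^ 2 * σY ^ 2 * (1 - ρ ^ 2) * ((I : ℝ) - 1) / (2 * (I : ℝ)) :=
    hP ▸ hR ▸ paretoRate_sub_radnerRate hI0 L μD μY δ σY a σD ρ
  refine ⟨gap, sub_nonneg.mp (gap ▸ rate_gap_nonneg hI' hρ2 a σY), ?_⟩
  rw [eq_comm, ← sub_eq_zero, gap, rate_gap_eq_zero_iff ha.ne' hI0, Nat.cast_eq_one]

/-- `r^Pareto − r^Radner = a²σ_Y²(1−ρ²)(I−1)/(2I) ≥ 0`; in particular
`r^Radner ≤ r^Pareto`, with equality iff `ρ² = 1`, `σ_Y = 0`, or `I = 1`. -/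
theorem stmt17 (I : ℕ) (hI : 1 ≤ I) (L μD μY ρ δ σY a σD : ℝ)
    (hρ : ρ ∈ Icc (-1 : ℝ) 1) (hδ : 0 ≤ δ) (hσY : 0 ≤ σY) (ha : 0 < a) (hσD : 0 < σD)
    (rRadner rPareto : ℝ)
    (hR : rRadner = δ + a / (I : ℝ) * (L * μD + (I : ℝ) * μY) -
      a ^ 2 / (2 * (I : ℝ) ^ 2) *
        ((I : ℝ) ^ 2 * σY ^ 2 + 2 * (I : ℝ) * L * ρ * σD * σY + L ^ 2 * σD ^ 2))
    (hP : rPareto = δ + a / (I : ℝ) * (L * μD + (I : ℝ) * μY) -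
      a ^ 2 / (2 * (I : ℝ) ^ 2) *
        ((L * σD + (I : ℝ) * σY * ρ) ^ 2 + (I : ℝ) * σY ^ 2 * (1 - ρ ^ 2))) :
    rPareto - rRadner = a ^ 2 * σY ^ 2 * (1 - ρ ^ 2) * ((I : ℝ) - 1) / (2 * (I : ℝ)) ∧
    rRadner ≤ rPareto ∧
    (rRadner = rPareto ↔ ρ ^ 2 = 1 ∨ σY = 0 ∨ I = 1) :=
  stmt17_general I hI L μD μY ρ δ σY a σD hρ ha rRadner rPareto hR hP
end
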